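/- Assume Lipschitz continuity of the transition kernels with constant C_p. Let π and π1 be two policies; in the N-player game, player 1 uses π1 and players 2, …, N use π. Let ℓ_t^(N) ∈ Δ(S×A) denote the marginal law of (s_t^(1), a_t^(1)) (the state-action pair of player 1 at time t), and let L_t(π1|π) := Ψ_t(π1, Ψ(π)) be the time-t occupation measure of a representative agent using π1 in the mean-field game with flow Ψ(π). Then for every t ∈ 𝒯, ‖ℓ_t^(N) − L_t(π1|π)‖_1 ≤ (1/(2√N) + 2/N)·C_p·|S||A|·(|𝒯|−1)·((C_{p,S,A}^{|𝒯|} − 1)/(C_{p,S,A} − 1)), where C_{p,S,A} := (C_p + 1)·|S||A|. -/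

import Mathlib

open Finset

namespace CMFG

/-- Membership in the probability simplex on a finite type. -/
def IsSimplex {X : Type*} [Fintype X] (f : X → ℝ) : Prop :=
  (∀ x, 0 ≤ f x) ∧ ∑ x, f x = 1

variable {S A : Type*} [Fintype S] [Fintype A]

/-- A (Markov, randomized) policy: `π t s ∈ Δ(A)` for every time `t` and state `s`. -/
def IsPolicy (π : ℕ → S → A → ℝ) : Prop := ∀ t s, IsSimplex (π t s)

/-- A mean-field flow: `L t ∈ Δ(S × A)` for every time `t`. -/
def IsFlow (L : ℕ → S × A → ℝ) : Prop := ∀ t, IsSimplex (L t)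

/-- The transition data is a Markov kernel: `p t s a m ∈ Δ(S)` whenever `m ∈ Δ(S × A)`. -/
def IsKernel (T : ℕ) (p : ℕ → S → A → (S × A → ℝ) → S → ℝ) : Prop :=
  ∀ t ≤ T, ∀ s a m, IsSimplex m → IsSimplex (p t s a m)

/-- The occupation measure `Ψ(π, L)` of a representative agent using policy `π`
under the mean-field flow `L`. -/
def psi (μ0 : S → ℝ) (p : ℕ → S → A → (S × A → ℝ) → S → ℝ)
    (π : ℕ → S → A → ℝ) (L : ℕ → S × A → ℝ) : ℕ → S × A → ℝ
  | 0 => fun sa => π 0 sa.1 sa.2 * μ0 sa.1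
  | t + 1 => fun sa =>
      π (t + 1) sa.1 sa.2 *
        ∑ sa' : S × A, p t sa'.1 sa'.2 (L t) sa.1 * psi μ0 p π L t sa'

/-- The mean-field flow `Ψ(π)` induced by the policy `π` alone. -/
def psiInd (μ0 : S → ℝ) (p : ℕ → S → A → (S × A → ℝ) → S → ℝ)
    (π : ℕ → S → A → ℝ) : ℕ → S × A → ℝ
  | 0 => fun sa => π 0 sa.1 sa.2 * μ0 sa.1
  | t + 1 => fun sa =>
      π (t + 1) sa.1 sa.2 *
        ∑ sa' : S × A, p t sa'.1 sa'.2 (psiInd μ0 p π t) sa.1 * psiInd μ0 p π t sa'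

/-- Expected cumulative reward `V^π(L)` of policy `π` under the mean-field flow `L`. -/
def V (T : ℕ) (μ0 : S → ℝ) (p : ℕ → S → A → (S × A → ℝ) → S → ℝ)
    (r : ℕ → S → A → (S × A → ℝ) → ℝ) (π : ℕ → S → A → ℝ) (L : ℕ → S × A → ℝ) : ℝ :=
  ∑ t ∈ Finset.range (T + 1), ∑ sa : S × A, r t sa.1 sa.2 (L t) * psi μ0 p π L t sa

/-- Expected cumulative cost `𝒞^π(L) ∈ ℝ^k` of policy `π` under the mean-field flow `L`. -/
def Cost (T k : ℕ) (μ0 : S → ℝ) (p : ℕ → S → A → (S × A → ℝ) → S → ℝ)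
    (c : ℕ → S → A → (S × A → ℝ) → Fin k → ℝ) (π : ℕ → S → A → ℝ)
    (L : ℕ → S × A → ℝ) : Fin k → ℝ :=
  fun i => ∑ t ∈ Finset.range (T + 1), ∑ sa : S × A, c t sa.1 sa.2 (L t) i * psi μ0 p π L t sa

/-- `π` is an optimal policy of the constrained MDP `CMDP(L)` with threshold `γ0`. -/
def IsCMDPOptimal (T k : ℕ) (μ0 : S → ℝ) (p : ℕ → S → A → (S × A → ℝ) → S → ℝ)
    (r : ℕ → S → A → (S × A → ℝ) → ℝ) (c : ℕ → S → A → (S × A → ℝ) → Fin k → ℝ)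
    (γ0 : Fin k → ℝ) (π : ℕ → S → A → ℝ) (L : ℕ → S × A → ℝ) : Prop :=
  IsPolicy π ∧ (∀ i, Cost T k μ0 p c π L i ≤ γ0 i) ∧
    ∀ π', IsPolicy π' → (∀ i, Cost T k μ0 p c π' L i ≤ γ0 i) →
      V T μ0 p r π' L ≤ V T μ0 p r π L

/-- `π` is an optimal policy of the unconstrained MDP `MDP(L)`. -/
def IsMDPOptimal (T : ℕ) (μ0 : S → ℝ) (p : ℕ → S → A → (S × A → ℝ) → S → ℝ)
    (r : ℕ → S → A → (S × A → ℝ) → ℝ) (π : ℕ → S → A → ℝ) (L : ℕ → S × A → ℝ) : Prop :=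
  IsPolicy π ∧ ∀ π', IsPolicy π' → V T μ0 p r π' L ≤ V T μ0 p r π L

/-- `(π, L)` is a Nash equilibrium of the constrained mean-field game (Definition 2.1):
optimality for `CMDP(L)` together with the consistency condition `L = Ψ(π)` on `𝒯`. -/
def IsCMFGNash (T k : ℕ) (μ0 : S → ℝ) (p : ℕ → S → A → (S × A → ℝ) → S → ℝ)
    (r : ℕ → S → A → (S × A → ℝ) → ℝ) (c : ℕ → S → A → (S × A → ℝ) → Fin k → ℝ)
    (γ0 : Fin k → ℝ) (π : ℕ → S → A → ℝ) (L : ℕ → S × A → ℝ) : Prop :=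
  IsCMDPOptimal T k μ0 p r c γ0 π L ∧ ∀ t ≤ T, L t = psiInd μ0 p π t

/-- Strict feasibility (Assumption 3.1) with margin `δ`. -/
def StrictFeasible (T k : ℕ) (μ0 : S → ℝ) (p : ℕ → S → A → (S × A → ℝ) → S → ℝ)
    (c : ℕ → S → A → (S × A → ℝ) → Fin k → ℝ) (γ0 : Fin k → ℝ) (δ : ℝ) : Prop :=
  0 < δ ∧ ∀ L, IsFlow L → ∀ i : Fin k, ∃ π, IsPolicy π ∧
    (∀ j, Cost T k μ0 p c π L j ≤ γ0 j) ∧ Cost T k μ0 p c π L i ≤ γ0 i - δ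

/-- Strengthened strict feasibility (Assumption 5.1) with margin `δ`. -/
def StrongFeasible (T k : ℕ) (μ0 : S → ℝ) (p : ℕ → S → A → (S × A → ℝ) → S → ℝ)
    (c : ℕ → S → A → (S × A → ℝ) → Fin k → ℝ) (γ0 : Fin k → ℝ) (δ : ℝ) : Prop :=
  0 < δ ∧ ∀ L, IsFlow L → ∃ π, IsPolicy π ∧ ∀ i, Cost T k μ0 p c π L i ≤ γ0 i - δ

/-- Continuity (Assumption 3.2): `p`, `r`, `c` are continuous in the mean-field argument. -/
def ContinuousData (T k : ℕ) (p : ℕ → S → A → (S × A → ℝ) → S → ℝ)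
    (r : ℕ → S → A → (S × A → ℝ) → ℝ)
    (c : ℕ → S → A → (S × A → ℝ) → Fin k → ℝ) : Prop :=
  (∀ t ≤ T, ∀ s a, ContinuousOn (fun m : S × A → ℝ => p t s a m) {m | IsSimplex m}) ∧
  (∀ t ≤ T, ∀ s a, ContinuousOn (fun m : S × A → ℝ => r t s a m) {m | IsSimplex m}) ∧
  (∀ t ≤ T, ∀ s a, ContinuousOn (fun m : S × A → ℝ => c t s a m) {m | IsSimplex m})

/-- Boundedness: `0 ≤ r ≤ rmax` and `0 ≤ c ≤ cmax` entrywise on the simplex. -/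
def BoundedData (T k : ℕ) (r : ℕ → S → A → (S × A → ℝ) → ℝ)
    (c : ℕ → S → A → (S × A → ℝ) → Fin k → ℝ) (rmax cmax : ℝ) : Prop :=
  ∀ t ≤ T, ∀ s a m, IsSimplex m →
    (0 ≤ r t s a m ∧ r t s a m ≤ rmax) ∧ ∀ i, 0 ≤ c t s a m i ∧ c t s a m i ≤ cmax

/-- The ℓ¹ norm of a finitely supported real vector. -/
def norm1 {J : Type*} [Fintype J] (v : J → ℝ) : ℝ := ∑ j, |v j|

/-- The ℓ² norm of a finitely supported real vector. -/
noncomputable def norm2 {J : Type*} [Fintype J] (v : J → ℝ) : ℝ :=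
  Real.sqrt (∑ j, (v j) ^ 2)

/-- Lipschitz continuity (Assumption 3.3) of `p`, `r`, `c` in the mean-field argument. -/
def LipschitzData (T k : ℕ) (p : ℕ → S → A → (S × A → ℝ) → S → ℝ)
    (r : ℕ → S → A → (S × A → ℝ) → ℝ)
    (c : ℕ → S → A → (S × A → ℝ) → Fin k → ℝ) (Cp Cr Cc : ℝ) : Prop :=
  0 < Cp ∧ 0 < Cr ∧ 0 < Cc ∧
  ∀ t ≤ T, ∀ m1 m2 : S × A → ℝ, IsSimplex m1 → IsSimplex m2 →
    ((∑ sa : S × A, ∑ s' : S, |p t sa.1 sa.2 m1 s' - p t sa.1 sa.2 m2 s'|) ≤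
        Cp * norm1 (fun sa => m1 sa - m2 sa)) ∧
    ((∑ sa : S × A, |r t sa.1 sa.2 m1 - r t sa.1 sa.2 m2|) ≤
        Cr * norm1 (fun sa => m1 sa - m2 sa)) ∧
    ((∑ sa : S × A, ∑ i, |c t sa.1 sa.2 m1 i - c t sa.1 sa.2 m2 i|) ≤
        Cc * norm1 (fun sa => m1 sa - m2 sa))

/-- Lipschitz continuity of the transition kernels alone. -/
def LipschitzKernel (T : ℕ) (p : ℕ → S → A → (S × A → ℝ) → S → ℝ) (Cp : ℝ) : Prop :=
  0 < Cp ∧ ∀ t ≤ T, ∀ m1 m2 : S × A → ℝ, IsSimplex m1 → IsSimplex m2 →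
    (∑ sa : S × A, ∑ s' : S, |p t sa.1 sa.2 m1 s' - p t sa.1 sa.2 m2 s'|) ≤
      Cp * norm1 (fun sa => m1 sa - m2 sa)

/-- The reward vector `r_L ∈ ℝ^{|S||A||𝒯|}`. -/
def rLvec (T : ℕ) (r : ℕ → S → A → (S × A → ℝ) → ℝ) (L : ℕ → S × A → ℝ) :
    Fin (T + 1) × S × A → ℝ :=
  fun x => r (x.1 : ℕ) x.2.1 x.2.2 (L (x.1 : ℕ))

/-- The cost matrix `c_L ∈ ℝ^{k × |S||A||𝒯|}`. -/
def cLmat (T k : ℕ) (c : ℕ → S → A → (S × A → ℝ) → Fin k → ℝ) (L : ℕ → S × A → ℝ) :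
    Fin k → Fin (T + 1) × S × A → ℝ :=
  fun i x => c (x.1 : ℕ) x.2.1 x.2.2 (L (x.1 : ℕ)) i

/-- The right-hand-side vector `b ∈ ℝ^{|S||𝒯|}`. -/
def bvec (T : ℕ) (μ0 : S → ℝ) : Fin (T + 1) × S → ℝ :=
  fun row => if (row.1 : ℕ) = T then μ0 row.2 else 0

/-- The constraint matrix `A_L ∈ ℝ^{|S||𝒯| × |S||A||𝒯|}`; `A_L d = b` encodes
`Σ_a d_0(s,a) = μ0(s)` and `Σ_a d_{t+1}(s,a) = Σ_{s',a'} p_t(s|s',a',L_t) d_t(s',a')`. -/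
def ALmat [DecidableEq S] (T : ℕ) (p : ℕ → S → A → (S × A → ℝ) → S → ℝ)
    (L : ℕ → S × A → ℝ) : Fin (T + 1) × S → Fin (T + 1) × S × A → ℝ :=
  fun row col =>
    if (row.1 : ℕ) < T then
      (if col.1 = row.1 then p (row.1 : ℕ) col.2.1 col.2.2 (L (row.1 : ℕ)) row.2 else 0) +
        (if (col.1 : ℕ) = (row.1 : ℕ) + 1 ∧ col.2.1 = row.2 then -1 else 0)
    else if (col.1 : ℕ) = 0 ∧ col.2.1 = row.2 then 1 else 0

/-- Matrix–vector product. -/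
def mulVec {I J : Type*} [Fintype J] (M : I → J → ℝ) (v : J → ℝ) : I → ℝ :=
  fun i => ∑ j, M i j * v j

/-- Transposed matrix–vector product `M^⊤ y`. -/
def tmulVec {I J : Type*} [Fintype I] (M : I → J → ℝ) (y : I → ℝ) : J → ℝ :=
  fun j => ∑ i, M i j * y i

/-- Euclidean inner product. -/
def dot {J : Type*} [Fintype J] (u v : J → ℝ) : ℝ := ∑ j, u j * v j

/-- View a vector indexed by `Fin (T+1) × S × A` as a time-indexed family. -/
def toFam (T : ℕ) (d : Fin (T + 1) × S × A → ℝ) : ℕ → S × A → ℝ :=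
  fun t sa => if h : t < T + 1 then d (⟨t, h⟩, sa.1, sa.2) else 0

/-- View a time-indexed family as a vector indexed by `Fin (T+1) × S × A`. -/
def toVec (T : ℕ) (d : ℕ → S × A → ℝ) : Fin (T + 1) × S × A → ℝ :=
  fun x => d (x.1 : ℕ) (x.2.1, x.2.2)

/-- `π ∈ Π(d)`: `π` is a policy inducing the occupation measure `d` wherever
`d` puts positive mass on a state. -/
def InPi (T : ℕ) (d : ℕ → S × A → ℝ) (π : ℕ → S → A → ℝ) : Prop :=
  IsPolicy π ∧ ∀ t ≤ T, ∀ s a, 0 < ∑ a' : A, d t (s, a') →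
    π t s a = d t (s, a) / ∑ a' : A, d t (s, a')

/-- Feasibility for the linear program `LP(L)`. -/
def LPFeasible [DecidableEq S] (T k : ℕ) (μ0 : S → ℝ)
    (p : ℕ → S → A → (S × A → ℝ) → S → ℝ)
    (c : ℕ → S → A → (S × A → ℝ) → Fin k → ℝ) (γ0 : Fin k → ℝ)
    (L : ℕ → S × A → ℝ) (d : Fin (T + 1) × S × A → ℝ) : Prop :=
  mulVec (ALmat T p L) d = bvec T μ0 ∧ (∀ i, dot (cLmat T k c L i) d ≤ γ0 i) ∧ ∀ x, 0 ≤ d x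

/-- Optimality for the linear program `LP(L)` (minimizing `-r_L^⊤ d`). -/
def LPOptimal [DecidableEq S] (T k : ℕ) (μ0 : S → ℝ)
    (p : ℕ → S → A → (S × A → ℝ) → S → ℝ) (r : ℕ → S → A → (S × A → ℝ) → ℝ)
    (c : ℕ → S → A → (S × A → ℝ) → Fin k → ℝ) (γ0 : Fin k → ℝ)
    (L : ℕ → S × A → ℝ) (d : Fin (T + 1) × S × A → ℝ) : Prop :=
  LPFeasible T k μ0 p c γ0 L d ∧
    ∀ d', LPFeasible T k μ0 p c γ0 L d' → dot (rLvec T r L) d' ≤ dot (rLvec T r L) d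

/-- The KKT system `𝒦(L)` associated with `LP(L)`. -/
def KKT [DecidableEq S] (T k : ℕ) (μ0 : S → ℝ)
    (p : ℕ → S → A → (S × A → ℝ) → S → ℝ) (r : ℕ → S → A → (S × A → ℝ) → ℝ)
    (c : ℕ → S → A → (S × A → ℝ) → Fin k → ℝ) (γ0 : Fin k → ℝ) (L : ℕ → S × A → ℝ)
    (d : Fin (T + 1) × S × A → ℝ) (y : Fin (T + 1) × S → ℝ)
    (z : Fin (T + 1) × S × A → ℝ) (lam : Fin k → ℝ) : Prop :=
  (∀ x, -(rLvec T r L x) =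
      tmulVec (ALmat T p L) y x + z x - ∑ i, cLmat T k c L i x * lam i) ∧
  mulVec (ALmat T p L) d = bvec T μ0 ∧
  (∀ i, dot (cLmat T k c L i) d ≤ γ0 i) ∧ (∀ x, 0 ≤ d x) ∧
  (∀ x, 0 ≤ z x) ∧ dot z d = 0 ∧ (∀ i, 0 ≤ lam i) ∧
  (∑ i, lam i * (dot (cLmat T k c L i) d - γ0 i)) = 0

/-- The population-level KKT system `𝒦^p(L)`. -/
def PopKKT [DecidableEq S] (T : ℕ) (μ0 : S → ℝ)
    (p : ℕ → S → A → (S × A → ℝ) → S → ℝ) (r : ℕ → S → A → (S × A → ℝ) → ℝ)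
    (L : ℕ → S × A → ℝ) (d : Fin (T + 1) × S × A → ℝ) (y : Fin (T + 1) × S → ℝ)
    (z : Fin (T + 1) × S × A → ℝ) : Prop :=
  (∀ x, -(rLvec T r L x) = tmulVec (ALmat T p L) y x + z x) ∧
  mulVec (ALmat T p L) d = bvec T μ0 ∧ (∀ x, 0 ≤ d x) ∧ (∀ x, 0 ≤ z x) ∧ dot z d = 0

/-- Bound for the dual variable `y` in CMFOMO. -/
noncomputable def yBound (cardS T : ℕ) (rmax cmax δ : ℝ) : ℝ :=
  (cardS : ℝ) * ((T : ℝ) + 1) * ((T : ℝ) + 2) / 2 * rmax * (1 + ((T : ℝ) + 1) / δ * cmax)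

/-- Bound for the dual variable `z` in CMFOMO. -/
noncomputable def zBound (cardS cardA T : ℕ) (rmax cmax δ : ℝ) : ℝ :=
  (cardS : ℝ) * (cardA : ℝ) * (((T : ℝ) + 1) ^ 2 - ((T : ℝ) + 1) + 2) * rmax *
    (1 + ((T : ℝ) + 1) / δ * cmax)

/-- Bound for the multiplier `λ` in CMFOMO. -/
noncomputable def lamBound (T : ℕ) (rmax δ : ℝ) : ℝ := ((T : ℝ) + 1) * rmax / δ

/-- The feasible region of the CMFOMO optimization problem. -/
noncomputable def CMFOMOFeasible (T k : ℕ) (rmax cmax δ : ℝ) (γ0 : Fin k → ℝ)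
    (Lv : Fin (T + 1) × S × A → ℝ) (y : Fin (T + 1) × S → ℝ)
    (z : Fin (T + 1) × S × A → ℝ) (lam w : Fin k → ℝ) : Prop :=
  (∀ x, 0 ≤ Lv x) ∧ (∀ t : Fin (T + 1), ∑ sa : S × A, Lv (t, sa.1, sa.2) = 1) ∧
  norm1 y ≤ yBound (Fintype.card S) T rmax cmax δ ∧
  (∀ x, 0 ≤ z x) ∧ norm1 z ≤ zBound (Fintype.card S) (Fintype.card A) T rmax cmax δ ∧
  (∀ i, 0 ≤ lam i ∧ lam i ≤ lamBound T rmax δ) ∧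
  (∀ i, 0 ≤ w i ∧ w i ≤ γ0 i)

/-- The CMFOMO objective function. -/
noncomputable def CMFOMOObj [DecidableEq S] (T k : ℕ) (μ0 : S → ℝ)
    (p : ℕ → S → A → (S × A → ℝ) → S → ℝ) (r : ℕ → S → A → (S × A → ℝ) → ℝ)
    (c : ℕ → S → A → (S × A → ℝ) → Fin k → ℝ) (γ0 : Fin k → ℝ)
    (c1 c2 c3 c4 c5 : ℝ) (Lv : Fin (T + 1) × S × A → ℝ) (y : Fin (T + 1) × S → ℝ)
    (z : Fin (T + 1) × S × A → ℝ) (lam w : Fin k → ℝ) : ℝ :=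
  c1 * norm2 (fun x => tmulVec (ALmat T p (toFam T Lv)) y x + z x +
        rLvec T r (toFam T Lv) x - ∑ i, cLmat T k c (toFam T Lv) i x * lam i) +
  c2 * norm2 (fun row => mulVec (ALmat T p (toFam T Lv)) Lv row - bvec T μ0 row) +
  c3 * dot z Lv +
  c4 * norm2 (fun i => γ0 i - dot (cLmat T k c (toFam T Lv) i) Lv - w i) +
  c5 * |∑ i, lam i * (γ0 i - dot (cLmat T k c (toFam T Lv) i) Lv)|

/-- The feasible region of the population-level CMFOMO problem. -/
noncomputable def PopCMFOMOFeasible (T k : ℕ) (rmax : ℝ) (γ0 : Fin k → ℝ)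
    (Lv : Fin (T + 1) × S × A → ℝ) (y : Fin (T + 1) × S → ℝ)
    (z : Fin (T + 1) × S × A → ℝ) (w : Fin k → ℝ) : Prop :=
  (∀ x, 0 ≤ Lv x) ∧ (∀ t : Fin (T + 1), ∑ sa : S × A, Lv (t, sa.1, sa.2) = 1) ∧
  norm1 y ≤ (Fintype.card S : ℝ) * ((T : ℝ) + 1) * ((T : ℝ) + 2) / 2 * rmax ∧
  (∀ x, 0 ≤ z x) ∧
  norm1 z ≤ (Fintype.card S : ℝ) * (Fintype.card A : ℝ) *
      (((T : ℝ) + 1) ^ 2 - ((T : ℝ) + 1) + 2) * rmax ∧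
  (∀ i, 0 ≤ w i ∧ w i ≤ γ0 i)

/-- The population-level CMFOMO objective function. -/
noncomputable def PopCMFOMOObj [DecidableEq S] (T k : ℕ) (μ0 : S → ℝ)
    (p : ℕ → S → A → (S × A → ℝ) → S → ℝ) (r : ℕ → S → A → (S × A → ℝ) → ℝ)
    (cp : ℕ → (S × A → ℝ) → Fin k → ℝ) (γ0 : Fin k → ℝ)
    (c1 c2 c3 c4 : ℝ) (Lv : Fin (T + 1) × S × A → ℝ) (y : Fin (T + 1) × S → ℝ)
    (z : Fin (T + 1) × S × A → ℝ) (w : Fin k → ℝ) : ℝ :=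
  c1 * norm2 (fun x => tmulVec (ALmat T p (toFam T Lv)) y x + z x + rLvec T r (toFam T Lv) x) +
  c2 * norm2 (fun row => mulVec (ALmat T p (toFam T Lv)) Lv row - bvec T μ0 row) +
  c3 * dot z Lv +
  c4 * norm2 (fun i => γ0 i -
    dot (cLmat T k (fun t _ _ m => cp t m) (toFam T Lv) i) Lv - w i)

/-- The optimal value `V*_c(L)` of the constrained MDP `CMDP(L)`. -/
noncomputable def Vstar (T k : ℕ) (μ0 : S → ℝ) (p : ℕ → S → A → (S × A → ℝ) → S → ℝ)
    (r : ℕ → S → A → (S × A → ℝ) → ℝ) (c : ℕ → S → A → (S × A → ℝ) → Fin k → ℝ)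
    (γ0 : Fin k → ℝ) (L : ℕ → S × A → ℝ) : ℝ :=
  sSup {v | ∃ π, IsPolicy π ∧ (∀ i, Cost T k μ0 p c π L i ≤ γ0 i) ∧ v = V T μ0 p r π L}

/-- The optimal value of the unconstrained MDP `MDP(L)`. -/
noncomputable def VstarU (T : ℕ) (μ0 : S → ℝ) (p : ℕ → S → A → (S × A → ℝ) → S → ℝ)
    (r : ℕ → S → A → (S × A → ℝ) → ℝ) (L : ℕ → S × A → ℝ) : ℝ :=
  sSup {v | ∃ π, IsPolicy π ∧ v = V T μ0 p r π L}

/-- The optimality gap `G_opt(π)`. -/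
noncomputable def Gopt (T k : ℕ) (μ0 : S → ℝ) (p : ℕ → S → A → (S × A → ℝ) → S → ℝ)
    (r : ℕ → S → A → (S × A → ℝ) → ℝ) (c : ℕ → S → A → (S × A → ℝ) → Fin k → ℝ)
    (γ0 : Fin k → ℝ) (π : ℕ → S → A → ℝ) : ℝ :=
  Vstar T k μ0 p r c γ0 (psiInd μ0 p π) - V T μ0 p r π (psiInd μ0 p π)

/-- The feasibility gap `G_fea(π)`. -/
noncomputable def Gfea (T k : ℕ) (μ0 : S → ℝ) (p : ℕ → S → A → (S × A → ℝ) → S → ℝ)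
    (c : ℕ → S → A → (S × A → ℝ) → Fin k → ℝ) (γ0 : Fin k → ℝ)
    (π : ℕ → S → A → ℝ) : ℝ :=
  norm2 (fun i : Fin k => min 0 (γ0 i - Cost T k μ0 p c π (psiInd μ0 p π) i))

/-- The population-level optimality gap. -/
noncomputable def GoptPop (T : ℕ) (μ0 : S → ℝ) (p : ℕ → S → A → (S × A → ℝ) → S → ℝ)
    (r : ℕ → S → A → (S × A → ℝ) → ℝ) (π : ℕ → S → A → ℝ) : ℝ :=
  VstarU T μ0 p r (psiInd μ0 p π) - V T μ0 p r π (psiInd μ0 p π)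

/-- The population-level feasibility gap. -/
noncomputable def GfeaPop (T k : ℕ) (μ0 : S → ℝ) (p : ℕ → S → A → (S × A → ℝ) → S → ℝ)
    (cp : ℕ → (S × A → ℝ) → Fin k → ℝ) (γ0 : Fin k → ℝ) (π : ℕ → S → A → ℝ) : ℝ :=
  norm2 (fun i : Fin k =>
    min 0 (γ0 i - ∑ t ∈ Finset.range (T + 1), cp t (psiInd μ0 p π t) i))

section NPlayer

variable [DecidableEq S] [DecidableEq A]

/-- Empirical state-action distribution of `N` players. -/
noncomputable def emp (N : ℕ) (x : Fin N → S × A) : S × A → ℝ :=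
  fun sa => (∑ i, if x i = sa then (1 : ℝ) else 0) / (N : ℝ)

/-- The joint law, at each time `t`, of the state-action profile of the `N` players
under the policy profile `πv`. -/
noncomputable def jointLaw (N : ℕ) (μ0 : S → ℝ) (p : ℕ → S → A → (S × A → ℝ) → S → ℝ)
    (πv : Fin N → ℕ → S → A → ℝ) : ℕ → (Fin N → S × A) → ℝ
  | 0 => fun x => ∏ i, μ0 (x i).1 * πv i 0 (x i).1 (x i).2
  | t + 1 => fun x => ∑ x' : Fin N → S × A, jointLaw N μ0 p πv t x' *
      ∏ i, p t (x' i).1 (x' i).2 (emp N x') (x i).1 * πv i (t + 1) (x i).1 (x i).2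

/-- Expected cumulative reward `V^{(i)}` of player `i` in the `N`-player game. -/
noncomputable def Vplayer (N T : ℕ) (μ0 : S → ℝ) (p : ℕ → S → A → (S × A → ℝ) → S → ℝ)
    (r : ℕ → S → A → (S × A → ℝ) → ℝ) (πv : Fin N → ℕ → S → A → ℝ) (i : Fin N) : ℝ :=
  ∑ t ∈ Finset.range (T + 1), ∑ x : Fin N → S × A,
    jointLaw N μ0 p πv t x * r t (x i).1 (x i).2 (emp N x)

/-- Expected cumulative cost `γ^{(i)}` of player `i` in the `N`-player game. -/
noncomputable def CostPlayer (N T k : ℕ) (μ0 : S → ℝ) (p : ℕ → S → A → (S × A → ℝ) → S → ℝ)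
    (c : ℕ → S → A → (S × A → ℝ) → Fin k → ℝ) (πv : Fin N → ℕ → S → A → ℝ)
    (i : Fin N) : Fin k → ℝ :=
  fun j => ∑ t ∈ Finset.range (T + 1), ∑ x : Fin N → S × A,
    jointLaw N μ0 p πv t x * c t (x i).1 (x i).2 (emp N x) j

/-- Feasibility gap `G_fea^{(i)}` of player `i` in the `N`-player game. -/
noncomputable def GfeaPlayer (N T k : ℕ) (μ0 : S → ℝ)
    (p : ℕ → S → A → (S × A → ℝ) → S → ℝ) (c : ℕ → S → A → (S × A → ℝ) → Fin k → ℝ)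
    (γ0 : Fin k → ℝ) (πv : Fin N → ℕ → S → A → ℝ) (i : Fin N) : ℝ :=
  norm2 (fun j : Fin k => min 0 (γ0 j - CostPlayer N T k μ0 p c πv i j))

/-- `(ε1, ε2)`-Nash equilibrium of the constrained `N`-player game. -/
noncomputable def IsEpsNash (N T k : ℕ) (μ0 : S → ℝ)
    (p : ℕ → S → A → (S × A → ℝ) → S → ℝ) (r : ℕ → S → A → (S × A → ℝ) → ℝ)
    (c : ℕ → S → A → (S × A → ℝ) → Fin k → ℝ) (γ0 : Fin k → ℝ)
    (πv : Fin N → ℕ → S → A → ℝ) (ε1 ε2 : ℝ) : Prop :=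
  ∀ i : Fin N,
    (∀ π', IsPolicy π' →
      GfeaPlayer N T k μ0 p c γ0 (Function.update πv i π') i = 0 →
      Vplayer N T μ0 p r (Function.update πv i π') i ≤ Vplayer N T μ0 p r πv i + ε1) ∧
    GfeaPlayer N T k μ0 p c γ0 πv i ≤ ε2

end NPlayer



/-! ### Auxiliary lemmas for Lemma B.3 -/

section B3Aux

lemma sum_pi_prod {ι : Type*} [Fintype ι] [DecidableEq ι] {α : Type*} [Fintype α]
    (f : ι → α → ℝ) : ∑ g : ι → α, ∏ i, f i (g i) = ∏ i, ∑ a, f i a := by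
  rw [Finset.prod_univ_sum, Fintype.piFinset_univ]

variable {ι : Type*} [Fintype ι] [DecidableEq ι] {α : Type*} [Fintype α]

lemma sum_prod_one (q : ι → α → ℝ) (hq : ∀ i, ∑ a, q i a = 1) :
    ∑ g : ι → α, ∏ i, q i (g i) = 1 := by
  rw [sum_pi_prod]
  simp [hq]

lemma sum_prod_eval (q : ι → α → ℝ) (hq : ∀ i, ∑ a, q i a = 1) (i0 : ι) (f : α → ℝ) :
    ∑ g : ι → α, (∏ i, q i (g i)) * f (g i0) = ∑ a, q i0 a * f a := by
  have h1 : ∀ g : ι → α, (∏ i, q i (g i)) * f (g i0)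
      = ∏ i, (fun i a => q i a * if i = i0 then f a else 1) i (g i) := by
    intro g
    simp only
    rw [Finset.prod_mul_distrib, Finset.prod_ite_eq' Finset.univ i0 (fun i => f (g i))]
    simp
  rw [Finset.sum_congr rfl (fun g _ => h1 g),
    sum_pi_prod (fun i a => q i a * if i = i0 then f a else 1)]
  have h2 : ∀ i : ι, (∑ a, q i a * if i = i0 then f a else 1)
      = (fun i => if i = i0 then ∑ a, q i0 a * f a else 1) i := by
    intro i
    by_cases h : i = i0 <;> simp [h, hq]
  rw [Finset.prod_congr rfl (fun i _ => h2 i),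
    Finset.prod_ite_eq' Finset.univ i0 (fun _ => ∑ a, q i0 a * f a)]
  simp

lemma prod_two_ite {i0 j0 : ι} (hij : i0 ≠ j0) (f h : ι → ℝ) :
    (∏ i, (if i = i0 then f i else if i = j0 then h i else 1)) = f i0 * h j0 := by
  rw [← Finset.mul_prod_erase Finset.univ _ (Finset.mem_univ i0),
    ← Finset.mul_prod_erase _ _ (Finset.mem_erase.mpr ⟨Ne.symm hij, Finset.mem_univ j0⟩)]
  rw [if_pos rfl, if_neg hij.symm, if_pos rfl]
  rw [Finset.prod_eq_one]
  · ring
  · intro i hi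
    simp only [Finset.mem_erase] at hi
    rw [if_neg hi.2.1, if_neg hi.1]

lemma sum_prod_eval2 (q : ι → α → ℝ) (hq : ∀ i, ∑ a, q i a = 1) {i0 j0 : ι}
    (hij : i0 ≠ j0) (f h : α → ℝ) :
    ∑ g : ι → α, (∏ i, q i (g i)) * (f (g i0) * h (g j0))
      = (∑ a, q i0 a * f a) * (∑ a, q j0 a * h a) := by
  have h1 : ∀ g : ι → α, (∏ i, q i (g i)) * (f (g i0) * h (g j0))
      = ∏ i, (fun i a => q i a * if i = i0 then f a else if i = j0 then h a else 1) i (g i) := by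
    intro g
    simp only
    rw [Finset.prod_mul_distrib,
      prod_two_ite hij (fun i => f (g i)) (fun i => h (g i))]
  rw [Finset.sum_congr rfl (fun g _ => h1 g),
    sum_pi_prod (fun i a => q i a * if i = i0 then f a else if i = j0 then h a else 1)]
  have h2 : ∀ i : ι, (∑ a, q i a * if i = i0 then f a else if i = j0 then h a else 1)
      = (fun i => if i = i0 then ∑ a, q i0 a * f a else
          if i = j0 then ∑ a, q j0 a * h a else 1) i := by
    intro i
    by_cases h' : i = i0
    · simp [h']
    · by_cases h'' : i = j0
      · subst h''
        simp [h']
      · simp [h', h'', hq]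
  rw [Finset.prod_congr rfl (fun i _ => h2 i),
    prod_two_ite hij (fun _ => ∑ a, q i0 a * f a) (fun _ => ∑ a, q j0 a * h a)]

end B3Aux

section B3Main

variable {S A : Type*} [Fintype S] [Fintype A] [DecidableEq S] [DecidableEq A]

lemma norm1_nonneg' {J : Type*} [Fintype J] (v : J → ℝ) : 0 ≤ norm1 v := by
  unfold norm1
  exact Finset.sum_nonneg fun j _ => abs_nonneg _

lemma norm1_triangle3 {J : Type*} [Fintype J] (u v w z : J → ℝ)
    (h : ∀ j, u j = v j + w j + z j) :
    norm1 u ≤ norm1 v + norm1 w + norm1 z := by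
  unfold norm1
  rw [← Finset.sum_add_distrib, ← Finset.sum_add_distrib]
  refine Finset.sum_le_sum fun j _ => ?_
  rw [h j]
  exact (abs_add_three _ _ _)

lemma emp_simplex {N : ℕ} (hN : 0 < N) (x : Fin N → S × A) : IsSimplex (emp N x) := by
  constructor
  · intro sa
    unfold emp
    have : (0:ℝ) ≤ ∑ i, if x i = sa then (1:ℝ) else 0 :=
      Finset.sum_nonneg fun i _ => by positivity
    positivity
  · unfold emp
    rw [← Finset.sum_div, Finset.sum_comm]
    have : ∀ i : Fin N, (∑ sa : S × A, if x i = sa then (1:ℝ) else 0) = 1 := by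
      intro i
      simp
    rw [Finset.sum_congr rfl fun i _ => this i]
    simp
    omega

lemma emp_eval {N : ℕ} (x : Fin N → S × A) (f : S × A → ℝ) :
    ∑ sa : S × A, emp N x sa * f sa = (∑ i, f (x i)) / N := by
  unfold emp
  simp_rw [div_mul_eq_mul_div, Finset.sum_mul, ← Finset.sum_div]
  congr 1
  rw [Finset.sum_comm]
  refine Finset.sum_congr rfl fun i _ => ?_
  simp [ite_mul]

lemma simplex_mul_pol (μ : S → ℝ) (hμ : IsSimplex μ) (κ : S → A → ℝ)
    (hκ : ∀ s, IsSimplex (κ s)) :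
    IsSimplex (fun sa : S × A => μ sa.1 * κ sa.1 sa.2) := by
  constructor
  · intro sa
    exact mul_nonneg (hμ.1 _) ((hκ _).1 _)
  · rw [Fintype.sum_prod_type]
    simp_rw [← Finset.mul_sum]
    have : ∀ s : S, μ s * ∑ a, κ s a = μ s := fun s => by rw [(hκ s).2, mul_one]
    rw [Finset.sum_congr rfl fun s _ => this s]
    exact hμ.2

lemma simplex_pol_mul (μ : S → ℝ) (hμ : IsSimplex μ) (κ : S → A → ℝ)
    (hκ : ∀ s, IsSimplex (κ s)) :
    IsSimplex (fun sa : S × A => κ sa.1 sa.2 * μ sa.1) := by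
  have h := simplex_mul_pol μ hμ κ hκ
  constructor
  · intro sa
    have := h.1 sa
    simp only at this ⊢
    linarith [mul_comm (μ sa.1) (κ sa.1 sa.2) ▸ this]
  · rw [← h.2]
    exact Finset.sum_congr rfl fun sa _ => mul_comm _ _

lemma simplex_push (pt : S → A → S → ℝ) (Ψ : S × A → ℝ) (hΨ : IsSimplex Ψ)
    (hker : ∀ s a, IsSimplex (fun s' => pt s a s')) :
    IsSimplex (fun s : S => ∑ sa' : S × A, pt sa'.1 sa'.2 s * Ψ sa') := by
  constructor
  · intro s
    exact Finset.sum_nonneg fun sa' _ =>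
      mul_nonneg ((hker sa'.1 sa'.2).1 _) (hΨ.1 _)
  · rw [Finset.sum_comm]
    have : ∀ sa' : S × A, (∑ s : S, pt sa'.1 sa'.2 s * Ψ sa') = Ψ sa' := by
      intro sa'
      rw [← Finset.sum_mul, (hker sa'.1 sa'.2).2, one_mul]
    rw [Finset.sum_congr rfl fun sa' _ => this sa']
    exact hΨ.2

lemma psiInd_simplex {T : ℕ} (μ0 : S → ℝ) (hμ0 : IsSimplex μ0)
    (p : ℕ → S → A → (S × A → ℝ) → S → ℝ) (hp : IsKernel T p)
    (π : ℕ → S → A → ℝ) (hπ : IsPolicy π) :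
    ∀ t ≤ T, IsSimplex (psiInd μ0 p π t) := by
  intro t
  induction t with
  | zero =>
    intro _
    exact simplex_pol_mul μ0 hμ0 (fun s a => π 0 s a) (fun s => hπ 0 s)
  | succ t ih =>
    intro ht
    have ht' : t ≤ T := Nat.le_of_succ_le ht
    have hΨ := ih ht'
    have hpush := simplex_push (fun s a s' => p t s a (psiInd μ0 p π t) s')
      (psiInd μ0 p π t) hΨ (fun s a => hp t ht' s a _ hΨ)
    exact simplex_pol_mul _ hpush (fun s a => π (t+1) s a) (fun s => hπ (t+1) s)

end B3Main

section B3Joint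

variable {S A : Type*} [Fintype S] [Fintype A] [DecidableEq S] [DecidableEq A]

/-- The one-step conditional kernel of player `i` in the `N`-player game. -/
noncomputable def qstep (N : ℕ) (p : ℕ → S → A → (S × A → ℝ) → S → ℝ)
    (πv : Fin N → ℕ → S → A → ℝ) (t : ℕ) (x' : Fin N → S × A) (i : Fin N) :
    S × A → ℝ :=
  fun sa => p t (x' i).1 (x' i).2 (emp N x') sa.1 * πv i (t + 1) sa.1 sa.2

lemma jointLaw_zero (N : ℕ) (μ0 : S → ℝ) (p : ℕ → S → A → (S × A → ℝ) → S → ℝ)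
    (πv : Fin N → ℕ → S → A → ℝ) (x : Fin N → S × A) :
    jointLaw N μ0 p πv 0 x
      = ∏ i, (fun b : S × A => μ0 b.1 * πv i 0 b.1 b.2) (x i) := rfl

lemma jointLaw_succ (N : ℕ) (μ0 : S → ℝ) (p : ℕ → S → A → (S × A → ℝ) → S → ℝ)
    (πv : Fin N → ℕ → S → A → ℝ) (t : ℕ) (x : Fin N → S × A) :
    jointLaw N μ0 p πv (t + 1) x
      = ∑ x' : Fin N → S × A, jointLaw N μ0 p πv t x' *
          ∏ i, qstep N p πv t x' i (x i) := rfl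

lemma qstep_simplex {T N : ℕ} (hN : 0 < N) (p : ℕ → S → A → (S × A → ℝ) → S → ℝ)
    (hp : IsKernel T p) (πv : Fin N → ℕ → S → A → ℝ) (hπv : ∀ i, IsPolicy (πv i))
    {t : ℕ} (ht : t ≤ T) (x' : Fin N → S × A) (i : Fin N) :
    IsSimplex (qstep N p πv t x' i) :=
  simplex_mul_pol _ (hp t ht _ _ _ (emp_simplex hN x')) _ (fun s => hπv i (t+1) s)

lemma base_simplex {N : ℕ} (μ0 : S → ℝ) (hμ0 : IsSimplex μ0)
    (πv : Fin N → ℕ → S → A → ℝ) (hπv : ∀ i, IsPolicy (πv i)) (i : Fin N) :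
    IsSimplex (fun b : S × A => μ0 b.1 * πv i 0 b.1 b.2) :=
  simplex_mul_pol μ0 hμ0 _ (fun s => hπv i 0 s)

lemma jointLaw_simplex {T N : ℕ} (hN : 0 < N) (μ0 : S → ℝ) (hμ0 : IsSimplex μ0)
    (p : ℕ → S → A → (S × A → ℝ) → S → ℝ) (hp : IsKernel T p)
    (πv : Fin N → ℕ → S → A → ℝ) (hπv : ∀ i, IsPolicy (πv i)) :
    ∀ t ≤ T, (∀ x, 0 ≤ jointLaw N μ0 p πv t x) ∧
      ∑ x : Fin N → S × A, jointLaw N μ0 p πv t x = 1 := by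
  intro t
  induction t with
  | zero =>
    intro _
    constructor
    · intro x
      rw [jointLaw_zero]
      exact Finset.prod_nonneg fun i _ => (base_simplex μ0 hμ0 πv hπv i).1 _
    · rw [Finset.sum_congr rfl fun x _ => jointLaw_zero N μ0 p πv x]
      exact sum_prod_one _ fun i => (base_simplex μ0 hμ0 πv hπv i).2
  | succ t ih =>
    intro ht
    have ht' : t ≤ T := Nat.le_of_succ_le ht
    obtain ⟨ih0, ih1⟩ := ih ht'
    constructor
    · intro x
      rw [jointLaw_succ]
      exact Finset.sum_nonneg fun x' _ => mul_nonneg (ih0 x')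
        (Finset.prod_nonneg fun i _ => (qstep_simplex hN p hp πv hπv ht' x' i).1 _)
    · rw [Finset.sum_congr rfl fun x _ => jointLaw_succ N μ0 p πv t x, Finset.sum_comm]
      have : ∀ x' : Fin N → S × A,
          (∑ x : Fin N → S × A, jointLaw N μ0 p πv t x' * ∏ i, qstep N p πv t x' i (x i))
            = jointLaw N μ0 p πv t x' := by
        intro x'
        rw [← Finset.mul_sum,
          sum_prod_one _ fun i => (qstep_simplex hN p hp πv hπv ht' x' i).2, mul_one]
      rw [Finset.sum_congr rfl fun x' _ => this x']
      exact ih1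

lemma marg_eval {N : ℕ} (μ0 : S → ℝ) (p : ℕ → S → A → (S × A → ℝ) → S → ℝ)
    (πv : Fin N → ℕ → S → A → ℝ) (i0 : Fin N) (t : ℕ) (f : S × A → ℝ) :
    ∑ sa : S × A, (∑ x : Fin N → S × A, jointLaw N μ0 p πv t x *
        (if x i0 = sa then (1:ℝ) else 0)) * f sa
      = ∑ x : Fin N → S × A, jointLaw N μ0 p πv t x * f (x i0) := by
  simp_rw [Finset.sum_mul]
  rw [Finset.sum_comm]
  refine Finset.sum_congr rfl fun x _ => ?_
  simp_rw [mul_assoc, ite_mul, one_mul, zero_mul, ← Finset.mul_sum]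
  congr 1
  simp

lemma marg_zero {N : ℕ} (μ0 : S → ℝ) (hμ0 : IsSimplex μ0)
    (p : ℕ → S → A → (S × A → ℝ) → S → ℝ)
    (πv : Fin N → ℕ → S → A → ℝ) (hπv : ∀ i, IsPolicy (πv i)) (i0 : Fin N) (sa : S × A) :
    ∑ x : Fin N → S × A, jointLaw N μ0 p πv 0 x * (if x i0 = sa then (1:ℝ) else 0)
      = πv i0 0 sa.1 sa.2 * μ0 sa.1 := by
  rw [Finset.sum_congr rfl fun x _ => by rw [jointLaw_zero],
    sum_prod_eval _ (fun i => (base_simplex μ0 hμ0 πv hπv i).2) i0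
      (fun b => if b = sa then (1:ℝ) else 0)]
  simp_rw [mul_ite, mul_one, mul_zero]
  rw [Finset.sum_ite_eq' Finset.univ sa (fun b => μ0 b.1 * πv i0 0 b.1 b.2)]
  simp [mul_comm]

lemma marg_succ {T N : ℕ} (hN : 0 < N) (μ0 : S → ℝ)
    (p : ℕ → S → A → (S × A → ℝ) → S → ℝ) (hp : IsKernel T p)
    (πv : Fin N → ℕ → S → A → ℝ) (hπv : ∀ i, IsPolicy (πv i)) (i0 : Fin N)
    {t : ℕ} (ht : t ≤ T) (sa : S × A) :
    ∑ x : Fin N → S × A, jointLaw N μ0 p πv (t+1) x * (if x i0 = sa then (1:ℝ) else 0)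
      = ∑ x' : Fin N → S × A, jointLaw N μ0 p πv t x' * qstep N p πv t x' i0 sa := by
  rw [Finset.sum_congr rfl fun x _ => by rw [jointLaw_succ]]
  simp_rw [Finset.sum_mul]
  rw [Finset.sum_comm]
  refine Finset.sum_congr rfl fun x' _ => ?_
  simp_rw [mul_assoc, ← Finset.mul_sum]
  congr 1
  rw [sum_prod_eval _ (fun i => (qstep_simplex hN p hp πv hπv ht x' i).2) i0
    (fun b => if b = sa then (1:ℝ) else 0)]
  simp_rw [mul_ite, mul_one, mul_zero]
  rw [Finset.sum_ite_eq' Finset.univ sa (qstep N p πv t x' i0)]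
  simp

end B3Joint

section B3Fluct

variable {S A : Type*} [Fintype S] [Fintype A] [DecidableEq S] [DecidableEq A]

lemma fluct {N : ℕ} (hN : 0 < N) (q : Fin N → S × A → ℝ) (hq : ∀ i, IsSimplex (q i))
    (sa : S × A) :
    ∑ g : Fin N → S × A, (∏ i, q i (g i)) * |emp N g sa - (∑ i, q i sa) / N|
      ≤ 1 / (2 * Real.sqrt N) := by
  have hNR : (0:ℝ) < N := by exact_mod_cast hN
  set w : (Fin N → S × A) → ℝ := fun g => ∏ i, q i (g i) with hw_def
  have hw : ∀ g, 0 ≤ w g := fun g => Finset.prod_nonneg fun i _ => (hq i).1 _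
  have hw1 : ∑ g, w g = 1 := sum_prod_one q fun i => (hq i).2
  set Y : Fin N → S × A → ℝ := fun i b => (if b = sa then (1:ℝ) else 0) - q i sa with hY_def
  have hZ : ∀ g : Fin N → S × A,
      emp N g sa - (∑ i, q i sa) / N = (∑ i, Y i (g i)) / N := by
    intro g
    unfold emp
    rw [div_sub_div_same]
    congr 1
    rw [Finset.sum_sub_distrib]
  have hmean : ∀ i, ∑ b, q i b * Y i b = 0 := by
    intro i
    simp_rw [hY_def, mul_sub, Finset.sum_sub_distrib, mul_ite, mul_one, mul_zero,
      ← Finset.sum_mul, (hq i).2, one_mul]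
    rw [Finset.sum_ite_eq' Finset.univ sa (q i)]
    simp
  have hvar : ∀ i, ∑ b, q i b * (Y i b * Y i b) ≤ 1/4 := by
    intro i
    have hexp : ∀ b, Y i b * Y i b
        = (if b = sa then (1:ℝ) else 0) - 2 * q i sa * (if b = sa then (1:ℝ) else 0)
          + q i sa * q i sa := by
      intro b
      by_cases h : b = sa <;> simp [hY_def, h] <;> ring
    calc ∑ b, q i b * (Y i b * Y i b)
        = ∑ b, (q i b * (if b = sa then (1:ℝ) else 0)
            - 2 * q i sa * (q i b * (if b = sa then (1:ℝ) else 0)) + q i b * (q i sa * q i sa)) := by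
          refine Finset.sum_congr rfl fun b _ => ?_
          rw [hexp b]; ring
      _ = q i sa - 2 * q i sa * q i sa + q i sa * q i sa := by
          rw [Finset.sum_add_distrib, Finset.sum_sub_distrib, ← Finset.mul_sum, ← Finset.sum_mul,
            (hq i).2, one_mul]
          simp_rw [mul_ite, mul_one, mul_zero]
          rw [Finset.sum_ite_eq' Finset.univ sa (q i)]
          simp
      _ ≤ 1/4 := by nlinarith [((hq i).1 sa : (0:ℝ) ≤ q i sa), sq_nonneg (q i sa - 1/2)]
  -- second moment
  have hsq : ∑ g, w g * (∑ i, Y i (g i))^2 ≤ N / 4 := by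
    have expand : ∑ g, w g * (∑ i, Y i (g i))^2
        = ∑ i, ∑ j, ∑ g, w g * (Y i (g i) * Y j (g j)) := by
      have : ∀ g : Fin N → S × A, w g * (∑ i, Y i (g i))^2
          = ∑ i, ∑ j, w g * (Y i (g i) * Y j (g j)) := by
        intro g
        rw [sq, Finset.sum_mul_sum]
        rw [Finset.mul_sum]
        refine Finset.sum_congr rfl fun i _ => ?_
        rw [Finset.mul_sum]
      rw [Finset.sum_congr rfl fun g _ => this g, Finset.sum_comm]
      refine Finset.sum_congr rfl fun i _ => Finset.sum_comm
    rw [expand]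
    have hoff : ∀ i j : Fin N, i ≠ j → ∑ g, w g * (Y i (g i) * Y j (g j)) = 0 := by
      intro i j hij
      rw [hw_def]
      rw [sum_prod_eval2 q (fun i => (hq i).2) hij (Y i) (Y j), hmean i, zero_mul]
    have hdiag : ∀ i : Fin N, ∑ g, w g * (Y i (g i) * Y i (g i)) ≤ 1/4 := by
      intro i
      rw [hw_def, sum_prod_eval q (fun i => (hq i).2) i (fun b => Y i b * Y i b)]
      exact hvar i
    calc ∑ i, ∑ j, ∑ g, w g * (Y i (g i) * Y j (g j))
        = ∑ i : Fin N, ∑ g, w g * (Y i (g i) * Y i (g i)) := by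
          refine Finset.sum_congr rfl fun i _ => ?_
          rw [Finset.sum_eq_single i (fun j _ hji => hoff i j (Ne.symm hji)) (by simp)]
      _ ≤ ∑ i : Fin N, 1/4 := Finset.sum_le_sum fun i _ => hdiag i
      _ = N / 4 := by simp [Finset.sum_const]; ring
  -- Cauchy–Schwarz
  set Z : (Fin N → S × A) → ℝ := fun g => (∑ i, Y i (g i)) / N with hZ_def
  have hCS : (∑ g, w g * |Z g|)^2 ≤ (∑ g, w g) * (∑ g, w g * (Z g)^2) := by
    have := Finset.sum_mul_sq_le_sq_mul_sq Finset.univ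
      (fun g => Real.sqrt (w g)) (fun g => Real.sqrt (w g) * |Z g|)
    calc (∑ g, w g * |Z g|)^2
        = (∑ g, Real.sqrt (w g) * (Real.sqrt (w g) * |Z g|))^2 := by
          congr 1
          refine Finset.sum_congr rfl fun g _ => ?_
          rw [← mul_assoc, Real.mul_self_sqrt (hw g)]
      _ ≤ (∑ g, Real.sqrt (w g)^2) * ∑ g, (Real.sqrt (w g) * |Z g|)^2 := this
      _ = (∑ g, w g) * (∑ g, w g * (Z g)^2) := by
          congr 1
          · exact Finset.sum_congr rfl fun g _ => Real.sq_sqrt (hw g)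
          · refine Finset.sum_congr rfl fun g _ => ?_
            rw [mul_pow, Real.sq_sqrt (hw g), sq_abs]
  have hZ2 : ∑ g, w g * (Z g)^2 ≤ 1 / (4*N) := by
    have : ∀ g, w g * (Z g)^2 = w g * (∑ i, Y i (g i))^2 / (N^2) := by
      intro g
      rw [hZ_def]
      rw [div_pow]
      ring
    rw [Finset.sum_congr rfl fun g _ => this g, ← Finset.sum_div]
    rw [div_le_div_iff₀ (by positivity) (by positivity)]
    calc (∑ g, w g * (∑ i, Y i (g i))^2) * (4*N) ≤ (N/4) * (4*N) := by
          apply mul_le_mul_of_nonneg_right hsq (by positivity)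
      _ = 1 * N^2 := by ring
  have hS0 : 0 ≤ ∑ g, w g * |Z g| :=
    Finset.sum_nonneg fun g _ => mul_nonneg (hw g) (abs_nonneg _)
  have hfin : ∑ g, w g * |Z g| ≤ 1 / (2 * Real.sqrt N) := by
    have h1 : (∑ g, w g * |Z g|)^2 ≤ 1/(4*N) := by
      rw [hw1, one_mul] at hCS
      exact le_trans hCS hZ2
    have h2 : (1:ℝ)/(4*N) = (1/(2*Real.sqrt N))^2 := by
      rw [div_pow, mul_pow, Real.sq_sqrt (le_of_lt hNR)]
      norm_num
    rw [h2] at h1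
    have hc : (0:ℝ) ≤ 1/(2*Real.sqrt N) := by positivity
    nlinarith [h1, hS0, hc]
  calc ∑ g : Fin N → S × A, (∏ i, q i (g i)) * |emp N g sa - (∑ i, q i sa) / N|
      = ∑ g, w g * |Z g| := by
        refine Finset.sum_congr rfl fun g _ => ?_
        rw [hZ g]
    _ ≤ 1 / (2 * Real.sqrt N) := hfin

end B3Fluct

section B3Bounds

variable {S A : Type*} [Fintype S] [Fintype A] [DecidableEq S] [DecidableEq A]

lemma norm1_triangle2 {J : Type*} [Fintype J] (u v w : J → ℝ)
    (h : ∀ j, u j = v j + w j) : norm1 u ≤ norm1 v + norm1 w := by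
  unfold norm1
  rw [← Finset.sum_add_distrib]
  refine Finset.sum_le_sum fun j _ => ?_
  rw [h j]
  exact abs_add_le _ _

lemma lip_single {T : ℕ} {p : ℕ → S → A → (S × A → ℝ) → S → ℝ} {Cp : ℝ}
    (hlip : LipschitzKernel T p Cp) {t : ℕ} (ht : t ≤ T)
    {m1 m2 : S × A → ℝ} (h1 : IsSimplex m1) (h2 : IsSimplex m2) (s : S) (a : A) :
    ∑ s', |p t s a m1 s' - p t s a m2 s'| ≤ Cp * norm1 (fun sa => m1 sa - m2 sa) := by
  refine le_trans ?_ (hlip.2 t ht m1 m2 h1 h2)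
  exact Finset.single_le_sum
    (f := fun sa : S × A => ∑ s', |p t sa.1 sa.2 m1 s' - p t sa.1 sa.2 m2 s'|)
    (fun sa _ => Finset.sum_nonneg fun s' _ => abs_nonneg _) (Finset.mem_univ (s, a))

lemma norm1_mix_le {ι : Type*} [Fintype ι] (w : ι → ℝ) (κ : ι → S → ℝ) (pol : S → A → ℝ)
    (hpol0 : ∀ s a, 0 ≤ pol s a) (hpol1 : ∀ s, ∑ a, pol s a = 1)
    (B : ι → ℝ) (hB : ∀ i, ∑ s, |κ i s| ≤ B i) :
    norm1 (fun sa : S × A => ∑ i, w i * (κ i sa.1 * pol sa.1 sa.2)) ≤ ∑ i, |w i| * B i := by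
  unfold norm1
  calc ∑ sa : S × A, |∑ i, w i * (κ i sa.1 * pol sa.1 sa.2)|
      ≤ ∑ sa : S × A, ∑ i, |w i| * (|κ i sa.1| * pol sa.1 sa.2) := by
        refine Finset.sum_le_sum fun sa _ => ?_
        refine le_trans (Finset.abs_sum_le_sum_abs _ _) (Finset.sum_le_sum fun i _ => ?_)
        rw [abs_mul, abs_mul, abs_of_nonneg (hpol0 _ _)]
    _ = ∑ i, ∑ sa : S × A, |w i| * (|κ i sa.1| * pol sa.1 sa.2) := Finset.sum_comm
    _ = ∑ i, |w i| * ∑ s, |κ i s| := by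
        refine Finset.sum_congr rfl fun i _ => ?_
        rw [← Finset.mul_sum]
        congr 1
        rw [Fintype.sum_prod_type]
        refine Finset.sum_congr rfl fun s _ => ?_
        show ∑ a : A, |κ i s| * pol s a = |κ i s|
        rw [← Finset.mul_sum, hpol1 s, mul_one]
    _ ≤ ∑ i, |w i| * B i :=
        Finset.sum_le_sum fun i _ => mul_le_mul_of_nonneg_left (hB i) (abs_nonneg _)

lemma norm1_dev_le {N : ℕ} (hN : 0 < N) (ρ : S → ℝ) (hρ0 : ∀ s, 0 ≤ ρ s)
    (hρ1 : ∑ s, ρ s = 1) (f g : S → A → ℝ) (hf : ∀ s, IsSimplex (f s))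
    (hg : ∀ s, IsSimplex (g s)) :
    norm1 (fun sa : S × A => ρ sa.1 * (f sa.1 sa.2 - g sa.1 sa.2) / N) ≤ 2 / N := by
  have hNR : (0:ℝ) < N := by exact_mod_cast hN
  unfold norm1
  rw [Fintype.sum_prod_type]
  have hs : ∀ s : S, ∑ a, |ρ s * (f s a - g s a) / ↑N| ≤ ρ s * (2 / N) := by
    intro s
    calc ∑ a, |ρ s * (f s a - g s a) / ↑N|
        = ∑ a, ρ s * |f s a - g s a| / N := by
          refine Finset.sum_congr rfl fun a _ => ?_
          rw [abs_div, abs_mul, abs_of_nonneg (hρ0 s), Nat.abs_cast]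
      _ ≤ ∑ a, ρ s * (f s a + g s a) / N := by
          refine Finset.sum_le_sum fun a _ => ?_
          have h1 := (hf s).1 a
          have h2 := (hg s).1 a
          have habs : |f s a - g s a| ≤ f s a + g s a := by
            rw [abs_sub_le_iff]
            constructor <;> linarith
          exact (div_le_div_iff_of_pos_right hNR).mpr (mul_le_mul_of_nonneg_left habs (hρ0 s))
      _ = ρ s * (2 / N) := by
          rw [← Finset.sum_div, ← Finset.mul_sum, Finset.sum_add_distrib, (hf s).2, (hg s).2]
          ring
  calc ∑ s, ∑ a, |ρ s * (f s a - g s a) / ↑N| ≤ ∑ s, ρ s * (2/N) :=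
        Finset.sum_le_sum fun s _ => hs s
    _ = 2 / N := by rw [← Finset.sum_mul, hρ1, one_mul]

end B3Bounds

section B3Cond

variable {S A : Type*} [Fintype S] [Fintype A] [DecidableEq S] [DecidableEq A]

lemma condmean_err {T N : ℕ} (hN : 0 < N) (μ0 : S → ℝ) (hμ0 : IsSimplex μ0)
    (p : ℕ → S → A → (S × A → ℝ) → S → ℝ) (hp : IsKernel T p) {Cp : ℝ}
    (hlip : LipschitzKernel T p Cp)
    (π π1 : ℕ → S → A → ℝ) (hπ : IsPolicy π) (hπ1 : IsPolicy π1)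
    (πv : Fin N → ℕ → S → A → ℝ) (i0 : Fin N) (hv0 : πv i0 = π1)
    (hvo : ∀ i, i ≠ i0 → πv i = π)
    {t : ℕ} (ht : t ≤ T) (x' : Fin N → S × A) :
    norm1 (fun sa => (∑ i, qstep N p πv t x' i sa) / N - psiInd μ0 p π (t+1) sa)
      ≤ 2 / N + (Cp + 1) * norm1 (fun sa => emp N x' sa - psiInd μ0 p π t sa) := by
  have hNR : (0:ℝ) < N := by exact_mod_cast hN
  have hLs : IsSimplex (emp N x') := emp_simplex hN x'
  have hΨs : IsSimplex (psiInd μ0 p π t) := psiInd_simplex μ0 hμ0 p hp π hπ t ht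
  have hker : ∀ sa' : S × A, IsSimplex (p t sa'.1 sa'.2 (emp N x')) :=
    fun sa' => hp t ht sa'.1 sa'.2 _ hLs
  have hkerΨ : ∀ sa' : S × A, IsSimplex (p t sa'.1 sa'.2 (psiInd μ0 p π t)) :=
    fun sa' => hp t ht sa'.1 sa'.2 _ hΨs
  set n0 : ℝ := norm1 (fun sa => emp N x' sa - psiInd μ0 p π t sa) with hn0
  have hdecomp : ∀ sa : S × A,
      (∑ i, qstep N p πv t x' i sa) / N - psiInd μ0 p π (t+1) sa
        = (fun sa : S × A => p t (x' i0).1 (x' i0).2 (emp N x') sa.1 *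
              (π1 (t+1) sa.1 sa.2 - π (t+1) sa.1 sa.2) / N) sa
          + (fun sa : S × A => ∑ sa' : S × A, emp N x' sa' *
              ((p t sa'.1 sa'.2 (emp N x') sa.1 - p t sa'.1 sa'.2 (psiInd μ0 p π t) sa.1) *
                π (t+1) sa.1 sa.2)) sa
          + (fun sa : S × A => ∑ sa' : S × A, (emp N x' sa' - psiInd μ0 p π t sa') *
              (p t sa'.1 sa'.2 (psiInd μ0 p π t) sa.1 * π (t+1) sa.1 sa.2)) sa := by
    intro sa
    simp only
    have e1 : (∑ i, qstep N p πv t x' i sa) / N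
        = p t (x' i0).1 (x' i0).2 (emp N x') sa.1 *
            (π1 (t+1) sa.1 sa.2 - π (t+1) sa.1 sa.2) / N
          + ∑ sa' : S × A, emp N x' sa' *
              (p t sa'.1 sa'.2 (emp N x') sa.1 * π (t+1) sa.1 sa.2) := by
      rw [emp_eval x' (fun sa' => p t sa'.1 sa'.2 (emp N x') sa.1 * π (t+1) sa.1 sa.2)]
      rw [← add_div]
      congr 1
      have split : ∀ i : Fin N, qstep N p πv t x' i sa
          = (if i = i0 then p t (x' i0).1 (x' i0).2 (emp N x') sa.1 *
                (π1 (t+1) sa.1 sa.2 - π (t+1) sa.1 sa.2) else 0)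
            + p t (x' i).1 (x' i).2 (emp N x') sa.1 * π (t+1) sa.1 sa.2 := by
        intro i
        by_cases h : i = i0
        · subst h
          show p t (x' i).1 (x' i).2 (emp N x') sa.1 * πv i (t+1) sa.1 sa.2 = _
          rw [hv0, if_pos rfl]
          ring
        · show p t (x' i).1 (x' i).2 (emp N x') sa.1 * πv i (t+1) sa.1 sa.2 = _
          rw [hvo i h, if_neg h, zero_add]
      rw [Finset.sum_congr rfl fun i _ => split i, Finset.sum_add_distrib,
        Finset.sum_ite_eq' Finset.univ i0
          (fun _ => p t (x' i0).1 (x' i0).2 (emp N x') sa.1 *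
            (π1 (t+1) sa.1 sa.2 - π (t+1) sa.1 sa.2))]
      simp
    have e2 : psiInd μ0 p π (t+1) sa
        = ∑ sa' : S × A, psiInd μ0 p π t sa' *
            (p t sa'.1 sa'.2 (psiInd μ0 p π t) sa.1 * π (t+1) sa.1 sa.2) := by
      show π (t+1) sa.1 sa.2 * (∑ sa' : S × A,
          p t sa'.1 sa'.2 (psiInd μ0 p π t) sa.1 * psiInd μ0 p π t sa') = _
      rw [Finset.mul_sum]
      exact Finset.sum_congr rfl fun sa' _ => by ring
    rw [e1, e2]
    have e3 : ∑ sa' : S × A, emp N x' sa' *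
        ((p t sa'.1 sa'.2 (emp N x') sa.1 - p t sa'.1 sa'.2 (psiInd μ0 p π t) sa.1) *
          π (t+1) sa.1 sa.2)
        = (∑ sa' : S × A, emp N x' sa' *
            (p t sa'.1 sa'.2 (emp N x') sa.1 * π (t+1) sa.1 sa.2))
          - ∑ sa' : S × A, emp N x' sa' *
            (p t sa'.1 sa'.2 (psiInd μ0 p π t) sa.1 * π (t+1) sa.1 sa.2) := by
      rw [← Finset.sum_sub_distrib]
      exact Finset.sum_congr rfl fun sa' _ => by ring
    have e4 : ∑ sa' : S × A, (emp N x' sa' - psiInd μ0 p π t sa') *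
        (p t sa'.1 sa'.2 (psiInd μ0 p π t) sa.1 * π (t+1) sa.1 sa.2)
        = (∑ sa' : S × A, emp N x' sa' *
            (p t sa'.1 sa'.2 (psiInd μ0 p π t) sa.1 * π (t+1) sa.1 sa.2))
          - ∑ sa' : S × A, psiInd μ0 p π t sa' *
            (p t sa'.1 sa'.2 (psiInd μ0 p π t) sa.1 * π (t+1) sa.1 sa.2) := by
      rw [← Finset.sum_sub_distrib]
      exact Finset.sum_congr rfl fun sa' _ => by ring
    rw [e3, e4]
    ring
  refine le_trans (norm1_triangle3 _ _ _ _ hdecomp) ?_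
  have b1 : norm1 (fun sa : S × A => p t (x' i0).1 (x' i0).2 (emp N x') sa.1 *
      (π1 (t+1) sa.1 sa.2 - π (t+1) sa.1 sa.2) / N) ≤ 2 / N :=
    norm1_dev_le hN _ (fun s => (hker (x' i0)).1 s) (hker (x' i0)).2
      (fun s a => π1 (t+1) s a) (fun s a => π (t+1) s a)
      (fun s => hπ1 (t+1) s) (fun s => hπ (t+1) s)
  have b2 : norm1 (fun sa : S × A => ∑ sa' : S × A, emp N x' sa' *
      ((p t sa'.1 sa'.2 (emp N x') sa.1 - p t sa'.1 sa'.2 (psiInd μ0 p π t) sa.1) *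
        π (t+1) sa.1 sa.2)) ≤ Cp * n0 := by
    refine le_trans (norm1_mix_le (w := emp N x')
      (κ := fun sa' s => p t sa'.1 sa'.2 (emp N x') s - p t sa'.1 sa'.2 (psiInd μ0 p π t) s)
      (pol := fun s a => π (t+1) s a) (fun s a => (hπ (t+1) s).1 a)
      (fun s => (hπ (t+1) s).2) (B := fun _ => Cp * n0)
      (fun sa' => lip_single hlip ht hLs hΨs sa'.1 sa'.2)) ?_
    refine le_of_eq ?_
    calc ∑ sa' : S × A, |emp N x' sa'| * (Cp * n0)
        = (∑ sa' : S × A, emp N x' sa') * (Cp * n0) := by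
          rw [← Finset.sum_mul]
          congr 1
          exact Finset.sum_congr rfl fun sa' _ => abs_of_nonneg (hLs.1 sa')
      _ = Cp * n0 := by rw [hLs.2, one_mul]
  have b3 : norm1 (fun sa : S × A => ∑ sa' : S × A,
      (emp N x' sa' - psiInd μ0 p π t sa') *
        (p t sa'.1 sa'.2 (psiInd μ0 p π t) sa.1 * π (t+1) sa.1 sa.2)) ≤ n0 := by
    refine le_trans (norm1_mix_le (w := fun sa' => emp N x' sa' - psiInd μ0 p π t sa')
      (κ := fun sa' s => p t sa'.1 sa'.2 (psiInd μ0 p π t) s)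
      (pol := fun s a => π (t+1) s a) (fun s a => (hπ (t+1) s).1 a)
      (fun s => (hπ (t+1) s).2) (B := fun _ => 1) (fun sa' => ?_)) ?_
    · rw [Finset.sum_congr rfl fun s _ => abs_of_nonneg ((hkerΨ sa').1 s)]
      exact le_of_eq (hkerΨ sa').2
    · simp only [mul_one]
      exact le_of_eq rfl
  have hrw : 2 / (N:ℝ) + (Cp + 1) * n0 = 2/N + (Cp * n0 + n0) := by ring
  rw [hrw]
  linarith [b1, b2, b3]

end B3Cond

section B3Rec

variable {S A : Type*} [Fintype S] [Fintype A] [DecidableEq S] [DecidableEq A]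

lemma eps_zero {T N : ℕ} (hN : 0 < N) (μ0 : S → ℝ) (hμ0 : IsSimplex μ0)
    (p : ℕ → S → A → (S × A → ℝ) → S → ℝ) (hp : IsKernel T p)
    (π π1 : ℕ → S → A → ℝ) (hπ : IsPolicy π) (hπ1 : IsPolicy π1)
    (πv : Fin N → ℕ → S → A → ℝ) (i0 : Fin N) (hv0 : πv i0 = π1)
    (hvo : ∀ i, i ≠ i0 → πv i = π) (hπv : ∀ i, IsPolicy (πv i)) :
    ∑ x : Fin N → S × A, jointLaw N μ0 p πv 0 x *
        norm1 (fun sa => emp N x sa - psiInd μ0 p π 0 sa)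
      ≤ (Fintype.card S * Fintype.card A : ℝ) / (2 * Real.sqrt N) + 2 / N := by
  have hNR : (0:ℝ) < N := by exact_mod_cast hN
  set q0 : Fin N → S × A → ℝ := fun i b => μ0 b.1 * πv i 0 b.1 b.2 with hq0_def
  have hq0 : ∀ i, IsSimplex (q0 i) := fun i => base_simplex μ0 hμ0 πv hπv i
  have hJ0 : ∀ x, jointLaw N μ0 p πv 0 x = ∏ i, q0 i (x i) := fun x => jointLaw_zero _ _ _ _ _
  have hJnn : ∀ x, 0 ≤ jointLaw N μ0 p πv 0 x := by
    intro x
    rw [hJ0]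
    exact Finset.prod_nonneg fun i _ => (hq0 i).1 _
  have hJsum : ∑ x : Fin N → S × A, jointLaw N μ0 p πv 0 x = 1 := by
    rw [Finset.sum_congr rfl fun x _ => hJ0 x]
    exact sum_prod_one q0 fun i => (hq0 i).2
  -- second part : bias
  have hbias : ∀ sa : S × A, (∑ i, q0 i sa) / N - psiInd μ0 p π 0 sa
      = μ0 sa.1 * (π1 0 sa.1 sa.2 - π 0 sa.1 sa.2) / N := by
    intro sa
    have hsplit : ∀ i : Fin N, q0 i sa
        = (if i = i0 then μ0 sa.1 * (π1 0 sa.1 sa.2 - π 0 sa.1 sa.2) else 0)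
          + μ0 sa.1 * π 0 sa.1 sa.2 := by
      intro i
      show μ0 sa.1 * πv i 0 sa.1 sa.2 = _
      by_cases h : i = i0
      · rw [h, hv0, if_pos rfl]
        ring
      · rw [hvo i h, if_neg h, zero_add]
    rw [Finset.sum_congr rfl fun i _ => hsplit i, Finset.sum_add_distrib,
      Finset.sum_ite_eq' Finset.univ i0
        (fun _ => μ0 sa.1 * (π1 0 sa.1 sa.2 - π 0 sa.1 sa.2)), Finset.sum_const]
    have hψ0 : psiInd μ0 p π 0 sa = π 0 sa.1 sa.2 * μ0 sa.1 := rfl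
    rw [hψ0]
    simp only [Finset.mem_univ, if_pos, Finset.card_univ, Fintype.card_fin, nsmul_eq_mul]
    field_simp
    ring
  have hbias1 : norm1 (fun sa : S × A => (∑ i, q0 i sa) / N - psiInd μ0 p π 0 sa) ≤ 2 / N := by
    have heq : (fun sa : S × A => (∑ i, q0 i sa) / N - psiInd μ0 p π 0 sa)
        = fun sa : S × A => μ0 sa.1 * (π1 0 sa.1 sa.2 - π 0 sa.1 sa.2) / N :=
      funext fun sa => hbias sa
    rw [heq]
    exact norm1_dev_le hN μ0 hμ0.1 hμ0.2 (fun s a => π1 0 s a) (fun s a => π 0 s a)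
      (fun s => hπ1 0 s) (fun s => hπ 0 s)
  -- fluctuation part
  have hfl : ∑ x : Fin N → S × A, jointLaw N μ0 p πv 0 x *
      norm1 (fun sa => emp N x sa - (∑ i, q0 i sa) / N)
      ≤ (Fintype.card S * Fintype.card A : ℝ) / (2 * Real.sqrt N) := by
    rw [Finset.sum_congr rfl fun x _ => by rw [hJ0]]
    unfold norm1
    simp_rw [Finset.mul_sum]
    rw [Finset.sum_comm]
    calc ∑ sa : S × A, ∑ x : Fin N → S × A, (∏ i, q0 i (x i)) * |emp N x sa - (∑ i, q0 i sa)/N|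
        ≤ ∑ _sa : S × A, 1 / (2 * Real.sqrt N) :=
          Finset.sum_le_sum fun sa _ => fluct hN q0 hq0 sa
      _ = (Fintype.card S * Fintype.card A : ℝ) / (2 * Real.sqrt N) := by
          rw [Finset.sum_const, Finset.card_univ, Fintype.card_prod, nsmul_eq_mul]
          push_cast
          ring
  -- combine
  calc ∑ x : Fin N → S × A, jointLaw N μ0 p πv 0 x *
        norm1 (fun sa => emp N x sa - psiInd μ0 p π 0 sa)
      ≤ ∑ x : Fin N → S × A, jointLaw N μ0 p πv 0 x *
          (norm1 (fun sa => emp N x sa - (∑ i, q0 i sa) / N)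
            + norm1 (fun sa => (∑ i, q0 i sa) / N - psiInd μ0 p π 0 sa)) := by
        refine Finset.sum_le_sum fun x _ => mul_le_mul_of_nonneg_left ?_ (hJnn x)
        exact norm1_triangle2 _ _ _ fun sa => by ring
    _ = (∑ x : Fin N → S × A, jointLaw N μ0 p πv 0 x *
          norm1 (fun sa => emp N x sa - (∑ i, q0 i sa) / N))
        + (∑ x : Fin N → S × A, jointLaw N μ0 p πv 0 x) *
          norm1 (fun sa => (∑ i, q0 i sa) / N - psiInd μ0 p π 0 sa) := by
        simp_rw [mul_add]
        rw [Finset.sum_add_distrib, Finset.sum_mul]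
    _ ≤ (Fintype.card S * Fintype.card A : ℝ) / (2 * Real.sqrt N) + 2 / N := by
        rw [hJsum, one_mul]
        exact add_le_add hfl hbias1

lemma eps_rec {T N : ℕ} (hN : 0 < N) (μ0 : S → ℝ) (hμ0 : IsSimplex μ0)
    (p : ℕ → S → A → (S × A → ℝ) → S → ℝ) (hp : IsKernel T p) {Cp : ℝ}
    (hlip : LipschitzKernel T p Cp)
    (π π1 : ℕ → S → A → ℝ) (hπ : IsPolicy π) (hπ1 : IsPolicy π1)
    (πv : Fin N → ℕ → S → A → ℝ) (i0 : Fin N) (hv0 : πv i0 = π1)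
    (hvo : ∀ i, i ≠ i0 → πv i = π) (hπv : ∀ i, IsPolicy (πv i))
    {t : ℕ} (ht : t + 1 ≤ T) :
    ∑ x : Fin N → S × A, jointLaw N μ0 p πv (t+1) x *
        norm1 (fun sa => emp N x sa - psiInd μ0 p π (t+1) sa)
      ≤ (Fintype.card S * Fintype.card A : ℝ) / (2 * Real.sqrt N) + 2 / N
        + (Cp + 1) * ∑ x : Fin N → S × A, jointLaw N μ0 p πv t x *
            norm1 (fun sa => emp N x sa - psiInd μ0 p π t sa) := by
  have hNR : (0:ℝ) < N := by exact_mod_cast hN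
  have ht' : t ≤ T := Nat.le_of_succ_le ht
  have hJnn : ∀ x, 0 ≤ jointLaw N μ0 p πv t x :=
    (jointLaw_simplex hN μ0 hμ0 p hp πv hπv t ht').1
  have hJsum : ∑ x : Fin N → S × A, jointLaw N μ0 p πv t x = 1 :=
    (jointLaw_simplex hN μ0 hμ0 p hp πv hπv t ht').2
  have hqs : ∀ x' i, IsSimplex (qstep N p πv t x' i) :=
    fun x' i => qstep_simplex hN p hp πv hπv ht' x' i
  set K : ℝ := (Fintype.card S * Fintype.card A : ℝ) / (2 * Real.sqrt N) + 2 / N with hK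
  -- inner bound for fixed x'
  have inner : ∀ x' : Fin N → S × A,
      ∑ x : Fin N → S × A, (∏ i, qstep N p πv t x' i (x i)) *
          norm1 (fun sa => emp N x sa - psiInd μ0 p π (t+1) sa)
        ≤ K + (Cp + 1) * norm1 (fun sa => emp N x' sa - psiInd μ0 p π t sa) := by
    intro x'
    have hqnn : ∀ x : Fin N → S × A, 0 ≤ ∏ i, qstep N p πv t x' i (x i) :=
      fun x => Finset.prod_nonneg fun i _ => (hqs x' i).1 _
    have hqsum : ∑ x : Fin N → S × A, ∏ i, qstep N p πv t x' i (x i) = 1 :=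
      sum_prod_one _ fun i => (hqs x' i).2
    have hcond := condmean_err hN μ0 hμ0 p hp hlip π π1 hπ hπ1 πv i0 hv0 hvo ht' x'
    have hflu : ∑ x : Fin N → S × A, (∏ i, qstep N p πv t x' i (x i)) *
        norm1 (fun sa => emp N x sa - (∑ i, qstep N p πv t x' i sa) / N)
        ≤ (Fintype.card S * Fintype.card A : ℝ) / (2 * Real.sqrt N) := by
      unfold norm1
      simp_rw [Finset.mul_sum]
      rw [Finset.sum_comm]
      calc ∑ sa : S × A, ∑ x : Fin N → S × A, (∏ i, qstep N p πv t x' i (x i)) *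
            |emp N x sa - (∑ i, qstep N p πv t x' i sa)/N|
          ≤ ∑ _sa : S × A, 1 / (2 * Real.sqrt N) :=
            Finset.sum_le_sum fun sa _ => fluct hN _ (hqs x') sa
        _ = (Fintype.card S * Fintype.card A : ℝ) / (2 * Real.sqrt N) := by
            rw [Finset.sum_const, Finset.card_univ, Fintype.card_prod, nsmul_eq_mul]
            push_cast
            ring
    calc ∑ x : Fin N → S × A, (∏ i, qstep N p πv t x' i (x i)) *
          norm1 (fun sa => emp N x sa - psiInd μ0 p π (t+1) sa)
        ≤ ∑ x : Fin N → S × A, (∏ i, qstep N p πv t x' i (x i)) *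
            (norm1 (fun sa => emp N x sa - (∑ i, qstep N p πv t x' i sa) / N)
              + norm1 (fun sa => (∑ i, qstep N p πv t x' i sa) / N - psiInd μ0 p π (t+1) sa)) := by
          refine Finset.sum_le_sum fun x _ => mul_le_mul_of_nonneg_left ?_ (hqnn x)
          exact norm1_triangle2 _ _ _ fun sa => by ring
      _ = (∑ x : Fin N → S × A, (∏ i, qstep N p πv t x' i (x i)) *
            norm1 (fun sa => emp N x sa - (∑ i, qstep N p πv t x' i sa) / N))
          + (∑ x : Fin N → S × A, ∏ i, qstep N p πv t x' i (x i)) *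
            norm1 (fun sa => (∑ i, qstep N p πv t x' i sa) / N - psiInd μ0 p π (t+1) sa) := by
          simp_rw [mul_add]
          rw [Finset.sum_add_distrib, Finset.sum_mul]
      _ ≤ (Fintype.card S * Fintype.card A : ℝ) / (2 * Real.sqrt N)
          + (2 / N + (Cp + 1) * norm1 (fun sa => emp N x' sa - psiInd μ0 p π t sa)) := by
          rw [hqsum, one_mul]
          exact add_le_add hflu hcond
      _ = K + (Cp + 1) * norm1 (fun sa => emp N x' sa - psiInd μ0 p π t sa) := by
          rw [hK]
          ring
  -- assemble
  calc ∑ x : Fin N → S × A, jointLaw N μ0 p πv (t+1) x *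
        norm1 (fun sa => emp N x sa - psiInd μ0 p π (t+1) sa)
      = ∑ x' : Fin N → S × A, jointLaw N μ0 p πv t x' *
          ∑ x : Fin N → S × A, (∏ i, qstep N p πv t x' i (x i)) *
            norm1 (fun sa => emp N x sa - psiInd μ0 p π (t+1) sa) := by
        rw [Finset.sum_congr rfl fun x _ => by rw [jointLaw_succ]]
        simp_rw [Finset.sum_mul]
        rw [Finset.sum_comm]
        refine Finset.sum_congr rfl fun x' _ => ?_
        rw [Finset.mul_sum]
        exact Finset.sum_congr rfl fun x _ => by ring
    _ ≤ ∑ x' : Fin N → S × A, jointLaw N μ0 p πv t x' *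
          (K + (Cp + 1) * norm1 (fun sa => emp N x' sa - psiInd μ0 p π t sa)) :=
        Finset.sum_le_sum fun x' _ => mul_le_mul_of_nonneg_left (inner x') (hJnn x')
    _ = K + (Cp + 1) * ∑ x : Fin N → S × A, jointLaw N μ0 p πv t x *
          norm1 (fun sa => emp N x sa - psiInd μ0 p π t sa) := by
        simp_rw [mul_add]
        rw [Finset.sum_add_distrib, ← Finset.sum_mul, hJsum, one_mul, Finset.mul_sum]
        congr 1
        exact Finset.sum_congr rfl fun x _ => by ring

end B3Rec

section B3Err

variable {S A : Type*} [Fintype S] [Fintype A] [DecidableEq S] [DecidableEq A]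

lemma err_rec {T N : ℕ} (hN : 0 < N) (μ0 : S → ℝ) (hμ0 : IsSimplex μ0)
    (p : ℕ → S → A → (S × A → ℝ) → S → ℝ) (hp : IsKernel T p) {Cp : ℝ}
    (hlip : LipschitzKernel T p Cp)
    (π π1 : ℕ → S → A → ℝ) (hπ : IsPolicy π) (hπ1 : IsPolicy π1)
    (πv : Fin N → ℕ → S → A → ℝ) (i0 : Fin N) (hv0 : πv i0 = π1)
    (hvo : ∀ i, i ≠ i0 → πv i = π) (hπv : ∀ i, IsPolicy (πv i))
    {t : ℕ} (ht : t + 1 ≤ T) :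
    norm1 (fun sa : S × A =>
        (∑ x : Fin N → S × A, jointLaw N μ0 p πv (t+1) x *
          (if x i0 = sa then (1:ℝ) else 0)) - psi μ0 p π1 (psiInd μ0 p π) (t+1) sa)
      ≤ norm1 (fun sa : S × A =>
          (∑ x : Fin N → S × A, jointLaw N μ0 p πv t x *
            (if x i0 = sa then (1:ℝ) else 0)) - psi μ0 p π1 (psiInd μ0 p π) t sa)
        + Cp * ∑ x : Fin N → S × A, jointLaw N μ0 p πv t x *
            norm1 (fun sa => emp N x sa - psiInd μ0 p π t sa) := by
  have ht' : t ≤ T := Nat.le_of_succ_le ht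
  have hJnn : ∀ x, 0 ≤ jointLaw N μ0 p πv t x :=
    (jointLaw_simplex hN μ0 hμ0 p hp πv hπv t ht').1
  have hΨs : IsSimplex (psiInd μ0 p π t) := psiInd_simplex μ0 hμ0 p hp π hπ t ht'
  have hkerΨ : ∀ sa' : S × A, IsSimplex (p t sa'.1 sa'.2 (psiInd μ0 p π t)) :=
    fun sa' => hp t ht' sa'.1 sa'.2 _ hΨs
  -- key decomposition
  have key : ∀ sa : S × A,
      (∑ x : Fin N → S × A, jointLaw N μ0 p πv (t+1) x *
          (if x i0 = sa then (1:ℝ) else 0)) - psi μ0 p π1 (psiInd μ0 p π) (t+1) sa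
        = (fun sa : S × A => ∑ x' : Fin N → S × A, jointLaw N μ0 p πv t x' *
            ((p t (x' i0).1 (x' i0).2 (emp N x') sa.1
              - p t (x' i0).1 (x' i0).2 (psiInd μ0 p π t) sa.1) * π1 (t+1) sa.1 sa.2)) sa
          + (fun sa : S × A => ∑ sa' : S × A,
              ((∑ x : Fin N → S × A, jointLaw N μ0 p πv t x *
                (if x i0 = sa' then (1:ℝ) else 0)) - psi μ0 p π1 (psiInd μ0 p π) t sa') *
              (p t sa'.1 sa'.2 (psiInd μ0 p π t) sa.1 * π1 (t+1) sa.1 sa.2)) sa := by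
    intro sa
    simp only
    rw [marg_succ hN μ0 p hp πv hπv i0 ht' sa]
    have hq0 : ∀ x' : Fin N → S × A, qstep N p πv t x' i0 sa
        = p t (x' i0).1 (x' i0).2 (emp N x') sa.1 * π1 (t+1) sa.1 sa.2 := by
      intro x'
      show p t (x' i0).1 (x' i0).2 (emp N x') sa.1 * πv i0 (t+1) sa.1 sa.2 = _
      rw [hv0]
    rw [Finset.sum_congr rfl fun x' _ => by rw [hq0 x']]
    have e1 : ∑ x' : Fin N → S × A, jointLaw N μ0 p πv t x' *
        (p t (x' i0).1 (x' i0).2 (emp N x') sa.1 * π1 (t+1) sa.1 sa.2)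
        = (∑ x' : Fin N → S × A, jointLaw N μ0 p πv t x' *
            ((p t (x' i0).1 (x' i0).2 (emp N x') sa.1
              - p t (x' i0).1 (x' i0).2 (psiInd μ0 p π t) sa.1) * π1 (t+1) sa.1 sa.2))
          + ∑ x' : Fin N → S × A, jointLaw N μ0 p πv t x' *
            (p t (x' i0).1 (x' i0).2 (psiInd μ0 p π t) sa.1 * π1 (t+1) sa.1 sa.2) := by
      rw [← Finset.sum_add_distrib]
      exact Finset.sum_congr rfl fun x' _ => by ring
    rw [e1]
    have e2 : ∑ x' : Fin N → S × A, jointLaw N μ0 p πv t x' *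
        (p t (x' i0).1 (x' i0).2 (psiInd μ0 p π t) sa.1 * π1 (t+1) sa.1 sa.2)
        = ∑ sa' : S × A, (∑ x : Fin N → S × A, jointLaw N μ0 p πv t x *
            (if x i0 = sa' then (1:ℝ) else 0)) *
            (p t sa'.1 sa'.2 (psiInd μ0 p π t) sa.1 * π1 (t+1) sa.1 sa.2) :=
      (marg_eval μ0 p πv i0 t
        (fun b => p t b.1 b.2 (psiInd μ0 p π t) sa.1 * π1 (t+1) sa.1 sa.2)).symm
    rw [e2]
    have e3 : psi μ0 p π1 (psiInd μ0 p π) (t+1) sa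
        = ∑ sa' : S × A, psi μ0 p π1 (psiInd μ0 p π) t sa' *
            (p t sa'.1 sa'.2 (psiInd μ0 p π t) sa.1 * π1 (t+1) sa.1 sa.2) := by
      show π1 (t+1) sa.1 sa.2 * (∑ sa' : S × A,
          p t sa'.1 sa'.2 (psiInd μ0 p π t) sa.1 * psi μ0 p π1 (psiInd μ0 p π) t sa') = _
      rw [Finset.mul_sum]
      exact Finset.sum_congr rfl fun sa' _ => by ring
    rw [e3]
    have e4 : ∑ sa' : S × A,
        ((∑ x : Fin N → S × A, jointLaw N μ0 p πv t x *
          (if x i0 = sa' then (1:ℝ) else 0)) - psi μ0 p π1 (psiInd μ0 p π) t sa') *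
        (p t sa'.1 sa'.2 (psiInd μ0 p π t) sa.1 * π1 (t+1) sa.1 sa.2)
        = (∑ sa' : S × A, (∑ x : Fin N → S × A, jointLaw N μ0 p πv t x *
            (if x i0 = sa' then (1:ℝ) else 0)) *
            (p t sa'.1 sa'.2 (psiInd μ0 p π t) sa.1 * π1 (t+1) sa.1 sa.2))
          - ∑ sa' : S × A, psi μ0 p π1 (psiInd μ0 p π) t sa' *
            (p t sa'.1 sa'.2 (psiInd μ0 p π t) sa.1 * π1 (t+1) sa.1 sa.2) := by
      rw [← Finset.sum_sub_distrib]
      exact Finset.sum_congr rfl fun sa' _ => by ring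
    rw [e4]
    ring
  have hu1 : norm1 (fun sa : S × A => ∑ x' : Fin N → S × A, jointLaw N μ0 p πv t x' *
      ((p t (x' i0).1 (x' i0).2 (emp N x') sa.1
        - p t (x' i0).1 (x' i0).2 (psiInd μ0 p π t) sa.1) * π1 (t+1) sa.1 sa.2))
      ≤ Cp * ∑ x : Fin N → S × A, jointLaw N μ0 p πv t x *
          norm1 (fun sa => emp N x sa - psiInd μ0 p π t sa) := by
    refine le_trans (norm1_mix_le (w := jointLaw N μ0 p πv t)
      (κ := fun x' s => p t (x' i0).1 (x' i0).2 (emp N x') s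
        - p t (x' i0).1 (x' i0).2 (psiInd μ0 p π t) s)
      (pol := fun s a => π1 (t+1) s a) (fun s a => (hπ1 (t+1) s).1 a)
      (fun s => (hπ1 (t+1) s).2)
      (B := fun x' => Cp * norm1 (fun sa => emp N x' sa - psiInd μ0 p π t sa))
      (fun x' => lip_single hlip ht' (emp_simplex hN x') hΨs (x' i0).1 (x' i0).2)) ?_
    refine le_of_eq ?_
    rw [Finset.mul_sum]
    refine Finset.sum_congr rfl fun x' _ => ?_
    rw [abs_of_nonneg (hJnn x')]
    ring
  have hu2 : norm1 (fun sa : S × A => ∑ sa' : S × A,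
      ((∑ x : Fin N → S × A, jointLaw N μ0 p πv t x *
        (if x i0 = sa' then (1:ℝ) else 0)) - psi μ0 p π1 (psiInd μ0 p π) t sa') *
      (p t sa'.1 sa'.2 (psiInd μ0 p π t) sa.1 * π1 (t+1) sa.1 sa.2))
      ≤ norm1 (fun sa : S × A =>
          (∑ x : Fin N → S × A, jointLaw N μ0 p πv t x *
            (if x i0 = sa then (1:ℝ) else 0)) - psi μ0 p π1 (psiInd μ0 p π) t sa) := by
    refine le_trans (norm1_mix_le
      (w := fun sa' => (∑ x : Fin N → S × A, jointLaw N μ0 p πv t x *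
        (if x i0 = sa' then (1:ℝ) else 0)) - psi μ0 p π1 (psiInd μ0 p π) t sa')
      (κ := fun sa' s => p t sa'.1 sa'.2 (psiInd μ0 p π t) s)
      (pol := fun s a => π1 (t+1) s a) (fun s a => (hπ1 (t+1) s).1 a)
      (fun s => (hπ1 (t+1) s).2) (B := fun _ => 1) (fun sa' => ?_)) ?_
    · rw [Finset.sum_congr rfl fun s _ => abs_of_nonneg ((hkerΨ sa').1 s)]
      exact le_of_eq (hkerΨ sa').2
    · simp only [mul_one]
      exact le_of_eq rfl
  have htri := norm1_triangle2 _ _ _ key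
  linarith [htri, hu1, hu2]

end B3Err

/-- Lemma B.3: in the `N`-player game where player 1 uses `π1` and all others use `π`,
the marginal law of player 1's state-action pair at time `t` is close in ℓ¹ to the
mean-field occupation measure `Ψ_t(π1, Ψ(π))` of a deviating representative agent. -/
theorem deviating_player_marginal_approximation {S A : Type*} [Fintype S] [Fintype A]
    [DecidableEq S] [DecidableEq A] [Nonempty S] [Nonempty A]
    (T N : ℕ) (hN : 0 < N) (μ0 : S → ℝ) (hμ0 : IsSimplex μ0)
    (p : ℕ → S → A → (S × A → ℝ) → S → ℝ) (hp : IsKernel T p)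
    (Cp : ℝ) (hlip : LipschitzKernel T p Cp)
    (π π1 : ℕ → S → A → ℝ) (hπ : IsPolicy π) (hπ1 : IsPolicy π1)
    (CpSA : ℝ)
    (hCpSA : CpSA = (Cp + 1) * (Fintype.card S : ℝ) * (Fintype.card A : ℝ)) :
    ∀ t ≤ T,
      norm1 (fun sa : S × A =>
          (∑ x : Fin N → S × A,
            jointLaw N μ0 p (fun i => if i = (⟨0, hN⟩ : Fin N) then π1 else π) t x *
              (if x (⟨0, hN⟩ : Fin N) = sa then (1 : ℝ) else 0)) -
          psi μ0 p π1 (psiInd μ0 p π) t sa) ≤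
        (1 / (2 * Real.sqrt (N : ℝ)) + 2 / (N : ℝ)) * Cp * (Fintype.card S : ℝ) *
          (Fintype.card A : ℝ) * (T : ℝ) * ((CpSA ^ (T + 1) - 1) / (CpSA - 1)) := by
  intro t ht
  subst hCpSA
  set i0 : Fin N := (⟨0, hN⟩ : Fin N) with hi0
  set πv : Fin N → ℕ → S → A → ℝ := fun i => if i = i0 then π1 else π with hπv_def
  have hv0 : πv i0 = π1 := by simp [hπv_def]
  have hvo : ∀ i, i ≠ i0 → πv i = π := fun i h => by simp [hπv_def, h]
  have hπv : ∀ i, IsPolicy (πv i) := by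
    intro i
    by_cases h : i = i0 <;> simp [hπv_def, h, hπ, hπ1]
  have hNR : (0:ℝ) < N := by exact_mod_cast hN
  have hsqrt : 0 < Real.sqrt N := Real.sqrt_pos.mpr hNR
  have hCp : 0 < Cp := hlip.1
  have hcS : 1 ≤ Fintype.card S := Fintype.card_pos
  have hcA : 1 ≤ Fintype.card A := Fintype.card_pos
  have hcard : (1:ℝ) ≤ (Fintype.card S : ℝ) * (Fintype.card A : ℝ) := by
    have := Nat.mul_le_mul hcS hcA
    calc (1:ℝ) = ((1*1 : ℕ) : ℝ) := by norm_num
      _ ≤ ((Fintype.card S * Fintype.card A : ℕ) : ℝ) := by exact_mod_cast this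
      _ = _ := by push_cast; ring
  have hδ'nn : (0:ℝ) ≤ (Fintype.card S * Fintype.card A : ℝ) / (2 * Real.sqrt N) + 2 / N := by
    positivity
  set δ' : ℝ := (Fintype.card S * Fintype.card A : ℝ) / (2 * Real.sqrt N) + 2 / N with hδ'
  set ε : ℕ → ℝ := fun u => ∑ x : Fin N → S × A, jointLaw N μ0 p πv u x *
    norm1 (fun sa => emp N x sa - psiInd μ0 p π u sa) with hε
  have step1 : ∀ u, u ≤ T → ε u ≤ δ' * ∑ j ∈ Finset.range (u+1), (Cp+1)^j := by
    intro u
    induction u with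
    | zero =>
      intro _
      have h0 := eps_zero hN μ0 hμ0 p hp π π1 hπ hπ1 πv i0 hv0 hvo hπv
      have hs : δ' * ∑ j ∈ Finset.range (0+1), (Cp+1)^j = δ' := by
        simp
      rw [hs]
      exact h0
    | succ u ih =>
      intro hu
      have hu' : u ≤ T := Nat.le_of_succ_le hu
      have hr := eps_rec hN μ0 hμ0 p hp hlip π π1 hπ hπ1 πv i0 hv0 hvo hπv hu
      have hih := ih hu'
      have hCp1 : (0:ℝ) ≤ Cp + 1 := by linarith
      calc ε (u+1) ≤ δ' + (Cp+1) * ε u := by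
            refine le_trans hr (le_of_eq ?_)
            rw [hδ']
        _ ≤ δ' + (Cp+1) * (δ' * ∑ j ∈ Finset.range (u+1), (Cp+1)^j) :=
            add_le_add_right (mul_le_mul_of_nonneg_left hih hCp1) _
        _ = δ' * ∑ j ∈ Finset.range (u+2), (Cp+1)^j := by
            rw [show (∑ j ∈ Finset.range (u+2), (Cp+1)^j)
              = (Cp+1) * ∑ j ∈ Finset.range (u+1), (Cp+1)^j + 1 from geom_sum_succ]
            ring
  set B : ℝ := ∑ j ∈ Finset.range (T+1), (Cp+1)^j with hB
  have hBnn : 0 ≤ B :=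
    Finset.sum_nonneg fun j _ => pow_nonneg (by linarith) j
  have step2 : ∀ u, u ≤ T → ε u ≤ δ' * B := by
    intro u hu
    refine le_trans (step1 u hu) (mul_le_mul_of_nonneg_left ?_ hδ'nn)
    refine Finset.sum_le_sum_of_subset_of_nonneg ?_ ?_
    · exact Finset.range_subset_range.mpr (by omega)
    · intro j _ _
      exact pow_nonneg (by linarith) j
  set errf : ℕ → ℝ := fun u => norm1 (fun sa : S × A =>
    (∑ x : Fin N → S × A, jointLaw N μ0 p πv u x * (if x i0 = sa then (1:ℝ) else 0))
      - psi μ0 p π1 (psiInd μ0 p π) u sa) with herrf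
  have err0 : errf 0 = 0 := by
    have hz : ∀ sa : S × A, (∑ x : Fin N → S × A, jointLaw N μ0 p πv 0 x *
        (if x i0 = sa then (1:ℝ) else 0)) - psi μ0 p π1 (psiInd μ0 p π) 0 sa = 0 := by
      intro sa
      rw [marg_zero μ0 hμ0 p πv hπv i0 sa, hv0]
      exact sub_self _
    have hfe : (fun sa : S × A =>
        (∑ x : Fin N → S × A, jointLaw N μ0 p πv 0 x * (if x i0 = sa then (1:ℝ) else 0))
          - psi μ0 p π1 (psiInd μ0 p π) 0 sa) = fun _ => (0:ℝ) := funext hz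
    show norm1 (fun sa : S × A =>
        (∑ x : Fin N → S × A, jointLaw N μ0 p πv 0 x * (if x i0 = sa then (1:ℝ) else 0))
          - psi μ0 p π1 (psiInd μ0 p π) 0 sa) = 0
    rw [hfe]
    unfold norm1
    simp
  have step3 : ∀ u, u ≤ T → errf u ≤ (u:ℝ) * (Cp * (δ' * B)) := by
    intro u
    induction u with
    | zero =>
      intro _
      rw [err0]
      simp
    | succ u ih =>
      intro hu
      have hu' : u ≤ T := Nat.le_of_succ_le hu
      have hrec := err_rec hN μ0 hμ0 p hp hlip π π1 hπ hπ1 πv i0 hv0 hvo hπv hu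
      have h2 := step2 u hu'
      calc errf (u+1) ≤ errf u + Cp * ε u := hrec
        _ ≤ (u:ℝ)*(Cp*(δ'*B)) + Cp*(δ'*B) :=
            add_le_add (ih hu') (mul_le_mul_of_nonneg_left h2 (le_of_lt hCp))
        _ = ((u+1:ℕ):ℝ)*(Cp*(δ'*B)) := by push_cast; ring
  have hmain := step3 t ht
  -- final comparison
  set δ'' : ℝ := (1/(2*Real.sqrt N) + 2/N) * ((Fintype.card S : ℝ) * (Fintype.card A : ℝ))
    with hδ''
  have hδ''nn : 0 ≤ δ'' := by
    rw [hδ'']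
    positivity
  have hδle : δ' ≤ δ'' := by
    rw [hδ', hδ'']
    have h2N : (0:ℝ) ≤ 2/N := by positivity
    have hmul := le_mul_of_one_le_right h2N hcard
    have heq : (1/(2*Real.sqrt N) + 2/N) * ((Fintype.card S : ℝ) * (Fintype.card A : ℝ))
        = (Fintype.card S * Fintype.card A : ℝ) / (2 * Real.sqrt N)
          + (2/N) * ((Fintype.card S : ℝ) * (Fintype.card A : ℝ)) := by
      field_simp
    rw [heq]
    linarith
  set x : ℝ := (Cp + 1) * (Fintype.card S : ℝ) * (Fintype.card A : ℝ) with hx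
  have hx1 : 1 < x := by
    rw [hx]
    nlinarith
  set G : ℝ := ∑ j ∈ Finset.range (T+1), x^j with hG
  have hGnn : 0 ≤ G :=
    Finset.sum_nonneg fun j _ => pow_nonneg (by linarith) j
  have hBG : B ≤ G := by
    refine Finset.sum_le_sum fun j _ => ?_
    refine pow_le_pow_left₀ (by linarith) ?_ j
    rw [hx]
    nlinarith
  have hgeom : G = (x ^ (T + 1) - 1) / (x - 1) := geom_sum_eq (ne_of_gt hx1) (T+1)
  have hfin : (t:ℝ) * (Cp * (δ' * B)) ≤ (T:ℝ) * (Cp * (δ'' * G)) := by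
    have m1 : (t:ℝ) ≤ T := Nat.cast_le.mpr ht
    have s1 : Cp * (δ' * B) ≤ Cp * (δ'' * G) := by
      refine mul_le_mul_of_nonneg_left ?_ (le_of_lt hCp)
      exact mul_le_mul hδle hBG hBnn hδ''nn
    calc (t:ℝ) * (Cp * (δ' * B)) ≤ (T:ℝ) * (Cp * (δ' * B)) := by
          refine mul_le_mul_of_nonneg_right m1 ?_
          exact mul_nonneg (le_of_lt hCp) (mul_nonneg hδ'nn hBnn)
      _ ≤ (T:ℝ) * (Cp * (δ'' * G)) :=
          mul_le_mul_of_nonneg_left s1 (Nat.cast_nonneg T)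
  refine le_trans hmain (le_trans hfin (le_of_eq ?_))
  rw [← hgeom, hδ'']
  ring

end CMFG
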